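/- arXiv:2208.09855 — 7 statements merged into one kernel-verified Lean document; each statement's English description precedes it below -/
import Mathlib

section
/- Fix a mutation rate μ ∈ (0,1], let r ∈ Δ°(A₁) × Δ°(A₂), and let π^{μ,r} be a stationary point of RMD with reference profile r. If r is not a Nash equilibrium, then min_{π*∈Π*} KL(π*, π^{μ,r}) < min_{π*∈Π*} KL(π*, r). If r is a Nash equilibrium, then π^{μ,r} = r. -/
open Finset Real

noncomputable section

/-- `p` is a point of the probability simplex over `A`. -/
def isSimplex {A : Type*} [Fintype A] (p : A → ℝ) : Prop :=
  (∀ a, 0 ≤ p a) ∧ ∑ a, p a = 1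

/-- `p` is a point of the relative interior of the probability simplex over `A`. -/
def isInterior {A : Type*} [Fintype A] (p : A → ℝ) : Prop :=
  (∀ a, 0 < p a) ∧ ∑ a, p a = 1

/-- Player 1's expected utility in the zero-sum game with payoff `u`. -/
def v1 {A1 A2 : Type*} [Fintype A1] [Fintype A2] (u : A1 → A2 → ℝ)
    (x : A1 → ℝ) (y : A2 → ℝ) : ℝ :=
  ∑ a, ∑ b, x a * y b * u a b

/-- Player 1's conditional expected utility of action `a` against `y`. -/
def q1 {A1 A2 : Type*} [Fintype A2] (u : A1 → A2 → ℝ) (y : A2 → ℝ) (a : A1) : ℝ :=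
  ∑ b, y b * u a b

/-- Player 2's conditional expected utility of action `b` against `x` (utility `-u`). -/
def q2 {A1 A2 : Type*} [Fintype A1] (u : A1 → A2 → ℝ) (x : A1 → ℝ) (b : A2) : ℝ :=
  ∑ a, x a * (- u a b)

/-- Kullback–Leibler divergence. -/
def KL {A : Type*} [Fintype A] (p q : A → ℝ) : ℝ :=
  ∑ a, p a * Real.log (p a / q a)

/-- Sum of KL divergences over the two players. -/
def KL2 {A1 A2 : Type*} [Fintype A1] [Fintype A2]
    (σ σ' : (A1 → ℝ) × (A2 → ℝ)) : ℝ :=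
  KL σ.1 σ'.1 + KL σ.2 σ'.2

/-- `σ` is a stationary point of the replicator-mutator dynamics with mutation
rate `μ` and reference profile `r`. -/
def isStationary {A1 A2 : Type*} [Fintype A1] [Fintype A2] (u : A1 → A2 → ℝ) (μ : ℝ)
    (r σ : (A1 → ℝ) × (A2 → ℝ)) : Prop :=
  isSimplex σ.1 ∧ isSimplex σ.2 ∧
  (∀ a, σ.1 a * (q1 u σ.2 a - v1 u σ.1 σ.2) + μ * (r.1 a - σ.1 a) = 0) ∧
  (∀ b, σ.2 b * (q2 u σ.1 b - (- v1 u σ.1 σ.2)) + μ * (r.2 b - σ.2 b) = 0)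

/-- One multiplicative-weights step with learning rate `η` and gain vector `g`. -/
def mwuStep {A : Type*} [Fintype A] (η : ℝ) (g p : A → ℝ) : A → ℝ :=
  fun a => p a * Real.exp (η * g a) / ∑ a', p a' * Real.exp (η * g a')

/-- Player 1's mutation gradient. -/
def qmu1 {A1 A2 : Type*} [Fintype A2] (u : A1 → A2 → ℝ) (μ : ℝ) (r1 : A1 → ℝ)
    (x : A1 → ℝ) (y : A2 → ℝ) (a : A1) : ℝ :=
  q1 u y a + μ / x a * (r1 a - x a)

/-- Player 2's mutation gradient. -/
def qmu2 {A1 A2 : Type*} [Fintype A1] (u : A1 → A2 → ℝ) (μ : ℝ) (r2 : A2 → ℝ)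
    (x : A1 → ℝ) (y : A2 → ℝ) (b : A2) : ℝ :=
  q2 u x b + μ / y b * (r2 b - y b)

/-- `σ` is a trajectory of M2WU with full feedback, learning rates `η`. -/
def isM2WU {A1 A2 : Type*} [Fintype A1] [Fintype A2] (u : A1 → A2 → ℝ) (μ : ℝ)
    (r : (A1 → ℝ) × (A2 → ℝ)) (η : ℕ → ℝ) (σ : ℕ → (A1 → ℝ) × (A2 → ℝ)) : Prop :=
  ∀ t, (σ (t+1)).1 = mwuStep (η t) (qmu1 u μ r.1 (σ t).1 (σ t).2) (σ t).1 ∧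
       (σ (t+1)).2 = mwuStep (η t) (qmu2 u μ r.2 (σ t).1 (σ t).2) (σ t).2

/-- Exploitability of a strategy profile. -/
def explt {A1 A2 : Type*} [Fintype A1] [Fintype A2] (u : A1 → A2 → ℝ)
    (σ : (A1 → ℝ) × (A2 → ℝ)) : ℝ :=
  (⨆ x : {p : A1 → ℝ // isSimplex p}, v1 u x.1 σ.2) +
  (⨆ y : {p : A2 → ℝ // isSimplex p}, - v1 u σ.1 y.1)

/-- Nash equilibrium of the two-player zero-sum game with payoff `u`. -/
def isNash {A1 A2 : Type*} [Fintype A1] [Fintype A2] (u : A1 → A2 → ℝ)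
    (σ : (A1 → ℝ) × (A2 → ℝ)) : Prop :=
  isSimplex σ.1 ∧ isSimplex σ.2 ∧
  (∀ y, isSimplex y → v1 u σ.1 σ.2 ≤ v1 u σ.1 y) ∧
  (∀ x, isSimplex x → v1 u x σ.2 ≤ v1 u σ.1 σ.2)

/-- ℓ¹ norm of a finitely supported vector. -/
def l1norm {A : Type*} [Fintype A] (p : A → ℝ) : ℝ := ∑ a, |p a|

/-- Euclidean distance between two profiles (concatenated coordinates). -/
def dist2 {A1 A2 : Type*} [Fintype A1] [Fintype A2]
    (σ σ' : (A1 → ℝ) × (A2 → ℝ)) : ℝ :=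
  Real.sqrt ((∑ a, (σ.1 a - σ'.1 a) ^ 2) + (∑ b, (σ.2 b - σ'.2 b) ^ 2))
set_option linter.unusedSectionVars false

section Aux

variable {A1 A2 : Type*} [Fintype A1] [Fintype A2]

theorem isSimplex_iff_stdSimplex {A : Type*} [Fintype A] {p : A → ℝ} :
    isSimplex p ↔ p ∈ stdSimplex ℝ A := Iff.rfl

theorem isInterior.isSimplex' {A : Type*} [Fintype A] {p : A → ℝ} (h : isInterior p) :
    isSimplex p := ⟨fun a => (h.1 a).le, h.2⟩

theorem v1_eq_sum_q1 (u : A1 → A2 → ℝ) (x : A1 → ℝ) (y : A2 → ℝ) :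
    v1 u x y = ∑ a, x a * q1 u y a := by
  unfold v1 q1
  exact Finset.sum_congr rfl fun a _ => by
    rw [Finset.mul_sum]; exact Finset.sum_congr rfl fun b _ => by ring

theorem sum_q2_eq (u : A1 → A2 → ℝ) (x : A1 → ℝ) (y : A2 → ℝ) :
    ∑ b, y b * q2 u x b = - v1 u x y := by
  have h : ∑ b, y b * q2 u x b + v1 u x y = 0 := by
    unfold q2 v1
    simp only [Finset.mul_sum]
    rw [Finset.sum_comm, ← Finset.sum_add_distrib]
    refine Finset.sum_eq_zero fun a _ => ?_
    rw [← Finset.sum_add_distrib]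
    exact Finset.sum_eq_zero fun b _ => by ring
  linarith

theorem v1_pure_left [DecidableEq A1] (u : A1 → A2 → ℝ) (a : A1) (y : A2 → ℝ) :
    v1 u (Pi.single a 1) y = q1 u y a := by
  rw [v1_eq_sum_q1]
  rw [Finset.sum_eq_single a]
  · simp
  · intro b _ hb; simp [Pi.single_apply, hb]
  · simp

theorem v1_pure_right [DecidableEq A2] (u : A1 → A2 → ℝ) (x : A1 → ℝ) (b : A2) :
    v1 u x (Pi.single b 1) = - q2 u x b := by
  have h := sum_q2_eq u x (Pi.single b 1)
  rw [Finset.sum_eq_single b] at h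
  · simp only [Pi.single_eq_same, one_mul] at h; linarith
  · intro c _ hc; simp [Pi.single_apply, hc]
  · simp

theorem isSimplex_single {A : Type*} [Fintype A] [DecidableEq A] (a : A) :
    isSimplex (Pi.single a (1:ℝ)) := by
  constructor
  · intro b; by_cases h : b = a <;> simp [Pi.single_apply, h]
  · simp

theorem isSimplex_comb {A : Type*} [Fintype A] {p q : A → ℝ} {t : ℝ} (hp : isSimplex p)
    (hq : isSimplex q) (h0 : 0 ≤ t) (h1 : t ≤ 1) :
    isSimplex (fun a => (1-t) * p a + t * q a) := by
  constructor
  · intro a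
    show 0 ≤ (1-t) * p a + t * q a
    have := hp.1 a; have := hq.1 a; nlinarith
  · rw [Finset.sum_add_distrib, ← Finset.mul_sum, ← Finset.mul_sum, hp.2, hq.2]; ring

theorem q1_comb (u : A1 → A2 → ℝ) (y y' : A2 → ℝ) (t : ℝ) (a : A1) :
    q1 u (fun b => (1-t) * y b + t * y' b) a = (1-t) * q1 u y a + t * q1 u y' a := by
  unfold q1
  rw [Finset.mul_sum, Finset.mul_sum, ← Finset.sum_add_distrib]
  exact Finset.sum_congr rfl fun b _ => by ring

theorem v1_comb_left (u : A1 → A2 → ℝ) (x x' : A1 → ℝ) (y : A2 → ℝ) (t : ℝ) :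
    v1 u (fun a => (1-t) * x a + t * x' a) y = (1-t) * v1 u x y + t * v1 u x' y := by
  rw [v1_eq_sum_q1, v1_eq_sum_q1, v1_eq_sum_q1, Finset.mul_sum, Finset.mul_sum,
    ← Finset.sum_add_distrib]
  exact Finset.sum_congr rfl fun a _ => by ring

theorem v1_comb_right (u : A1 → A2 → ℝ) (x : A1 → ℝ) (y y' : A2 → ℝ) (t : ℝ) :
    v1 u x (fun b => (1-t) * y b + t * y' b) = (1-t) * v1 u x y + t * v1 u x y' := by
  rw [v1_eq_sum_q1, v1_eq_sum_q1, v1_eq_sum_q1, Finset.mul_sum, Finset.mul_sum,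
    ← Finset.sum_add_distrib]
  refine Finset.sum_congr rfl fun a _ => ?_
  rw [q1_comb]; ring

end Aux
section Key

variable {A1 A2 : Type*} [Fintype A1] [Fintype A2]
variable {u : A1 → A2 → ℝ} {μ : ℝ} {r σ : (A1 → ℝ) × (A2 → ℝ)}

theorem key_q1 (hst : isStationary u μ r σ) (hσ1 : isInterior σ.1) (a : A1) :
    q1 u σ.2 a - v1 u σ.1 σ.2 = μ * (1 - r.1 a / σ.1 a) := by
  have h := hst.2.2.1 a
  have hne : σ.1 a ≠ 0 := ne_of_gt (hσ1.1 a)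
  have h2 : 1 - r.1 a / σ.1 a = (σ.1 a - r.1 a) / σ.1 a := by
    rw [sub_div, div_self hne]
  rw [h2, ← mul_div_assoc, eq_div_iff hne]
  linear_combination h

theorem key_q2 (hst : isStationary u μ r σ) (hσ2 : isInterior σ.2) (b : A2) :
    q2 u σ.1 b + v1 u σ.1 σ.2 = μ * (1 - r.2 b / σ.2 b) := by
  have h := hst.2.2.2 b
  have hne : σ.2 b ≠ 0 := ne_of_gt (hσ2.1 b)
  have h2 : 1 - r.2 b / σ.2 b = (σ.2 b - r.2 b) / σ.2 b := by
    rw [sub_div, div_self hne]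
  rw [h2, ← mul_div_assoc, eq_div_iff hne]
  linear_combination h

theorem key1 (hst : isStationary u μ r σ) (hσ1 : isInterior σ.1)
    {p : A1 → ℝ} (hp : isSimplex p) :
    v1 u p σ.2 - v1 u σ.1 σ.2 = μ * (1 - ∑ a, p a * (r.1 a / σ.1 a)) := by
  have hsum : ∑ a, p a * (q1 u σ.2 a - v1 u σ.1 σ.2) = v1 u p σ.2 - v1 u σ.1 σ.2 := by
    simp only [mul_sub]
    rw [Finset.sum_sub_distrib, ← v1_eq_sum_q1, ← Finset.sum_mul, hp.2, one_mul]
  rw [← hsum, Finset.sum_congr rfl (fun a _ => by rw [key_q1 hst hσ1 a])]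
  have h3 : ∑ a, p a * (μ * (1 - r.1 a / σ.1 a)) = μ * ∑ a, (p a - p a * (r.1 a / σ.1 a)) := by
    rw [Finset.mul_sum]
    exact Finset.sum_congr rfl fun a _ => by ring
  rw [h3, Finset.sum_sub_distrib, hp.2]

theorem key2 (hst : isStationary u μ r σ) (hσ2 : isInterior σ.2)
    {p : A2 → ℝ} (hp : isSimplex p) :
    v1 u σ.1 σ.2 - v1 u σ.1 p = μ * (1 - ∑ b, p b * (r.2 b / σ.2 b)) := by
  have hsum : ∑ b, p b * (q2 u σ.1 b + v1 u σ.1 σ.2)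
      = v1 u σ.1 σ.2 - v1 u σ.1 p := by
    simp only [mul_add]
    rw [Finset.sum_add_distrib, sum_q2_eq, ← Finset.sum_mul, hp.2, one_mul]
    ring
  rw [← hsum, Finset.sum_congr rfl (fun b _ => by rw [key_q2 hst hσ2 b])]
  have h3 : ∑ b, p b * (μ * (1 - r.2 b / σ.2 b)) = μ * ∑ b, (p b - p b * (r.2 b / σ.2 b)) := by
    rw [Finset.mul_sum]
    exact Finset.sum_congr rfl fun b _ => by ring
  rw [h3, Finset.sum_sub_distrib, hp.2]

theorem stationary_eq_of_nash (hμ : 0 < μ) (hst : isStationary u μ r σ)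
    (hσ1 : isInterior σ.1) (hσ2 : isInterior σ.2) (hr1 : isInterior r.1) (hr2 : isInterior r.2)
    (hr : isNash u r) : σ = r := by
  have k1 := key1 hst hσ1 hr1.isSimplex'
  have k2 := key2 hst hσ2 hr2.isSimplex'
  have hS1 : ∑ a, (r.1 a - σ.1 a)^2 / σ.1 a = (∑ a, r.1 a * (r.1 a / σ.1 a)) - 1 := by
    rw [Finset.sum_congr rfl (fun a _ => show (r.1 a - σ.1 a)^2 / σ.1 a
      = r.1 a * (r.1 a / σ.1 a) - 2 * r.1 a + σ.1 a by
        have hne : σ.1 a ≠ 0 := ne_of_gt (hσ1.1 a)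
        field_simp; ring)]
    rw [Finset.sum_add_distrib, Finset.sum_sub_distrib, ← Finset.mul_sum, hr1.2, hσ1.2]
    ring
  have hS2 : ∑ b, (r.2 b - σ.2 b)^2 / σ.2 b = (∑ b, r.2 b * (r.2 b / σ.2 b)) - 1 := by
    rw [Finset.sum_congr rfl (fun b _ => show (r.2 b - σ.2 b)^2 / σ.2 b
      = r.2 b * (r.2 b / σ.2 b) - 2 * r.2 b + σ.2 b by
        have hne : σ.2 b ≠ 0 := ne_of_gt (hσ2.1 b)
        field_simp; ring)]
    rw [Finset.sum_add_distrib, Finset.sum_sub_distrib, ← Finset.mul_sum, hr2.2, hσ2.2]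
    ring
  have hX : v1 u r.1 r.2 ≤ v1 u r.1 σ.2 := hr.2.2.1 σ.2 hσ2.isSimplex'
  have hY : v1 u σ.1 r.2 ≤ v1 u r.1 r.2 := hr.2.2.2 σ.1 hσ1.isSimplex'
  have hAB : (∑ a, r.1 a * (r.1 a / σ.1 a)) + (∑ b, r.2 b * (r.2 b / σ.2 b)) ≤ 2 := by
    nlinarith [k1, k2]
  have h1nonneg : ∀ a ∈ Finset.univ, 0 ≤ (r.1 a - σ.1 a)^2 / σ.1 a :=
    fun a _ => div_nonneg (sq_nonneg _) (hσ1.1 a).le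
  have h2nonneg : ∀ b ∈ Finset.univ, 0 ≤ (r.2 b - σ.2 b)^2 / σ.2 b :=
    fun b _ => div_nonneg (sq_nonneg _) (hσ2.1 b).le
  have hS1nonneg : 0 ≤ ∑ a, (r.1 a - σ.1 a)^2 / σ.1 a := Finset.sum_nonneg h1nonneg
  have hS2nonneg : 0 ≤ ∑ b, (r.2 b - σ.2 b)^2 / σ.2 b := Finset.sum_nonneg h2nonneg
  have hS1zero : ∑ a, (r.1 a - σ.1 a)^2 / σ.1 a = 0 := by linarith
  have hS2zero : ∑ b, (r.2 b - σ.2 b)^2 / σ.2 b = 0 := by linarith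
  have e1 : ∀ a, σ.1 a = r.1 a := by
    intro a
    have h0 := (Finset.sum_eq_zero_iff_of_nonneg h1nonneg).1 hS1zero a (Finset.mem_univ a)
    have hne : σ.1 a ≠ 0 := ne_of_gt (hσ1.1 a)
    have hsq : (r.1 a - σ.1 a)^2 = 0 := by
      rcases div_eq_zero_iff.1 h0 with h | h
      · exact h
      · exact absurd h hne
    have := pow_eq_zero_iff (n := 2) (by norm_num) |>.1 hsq
    linarith [sub_eq_zero.1 this]
  have e2 : ∀ b, σ.2 b = r.2 b := by
    intro b
    have h0 := (Finset.sum_eq_zero_iff_of_nonneg h2nonneg).1 hS2zero b (Finset.mem_univ b)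
    have hne : σ.2 b ≠ 0 := ne_of_gt (hσ2.1 b)
    have hsq : (r.2 b - σ.2 b)^2 = 0 := by
      rcases div_eq_zero_iff.1 h0 with h | h
      · exact h
      · exact absurd h hne
    have := pow_eq_zero_iff (n := 2) (by norm_num) |>.1 hsq
    linarith [sub_eq_zero.1 this]
  exact Prod.ext (funext e1) (funext e2)

end Key
section Exist

variable {A1 A2 : Type*} [Fintype A1] [Fintype A2]

/-- Player 1 optimal strategies (guaranteeing value `v`). -/
def Opt1 (u : A1 → A2 → ℝ) (v : ℝ) (x : A1 → ℝ) : Prop :=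
  isSimplex x ∧ ∀ y, isSimplex y → v ≤ v1 u x y

/-- Player 2 optimal strategies (guaranteeing value `v`). -/
def Opt2 (u : A1 → A2 → ℝ) (v : ℝ) (y : A2 → ℝ) : Prop :=
  isSimplex y ∧ ∀ x, isSimplex x → v1 u x y ≤ v

theorem isNash_of_opt {u : A1 → A2 → ℝ} {v : ℝ} {x : A1 → ℝ} {y : A2 → ℝ}
    (h1 : Opt1 u v x) (h2 : Opt2 u v y) : isNash u (x, y) := by
  have hv : v1 u x y = v := le_antisymm (h2.2 x h1.1) (h1.2 y h2.1)
  refine ⟨h1.1, h2.1, fun y' hy' => ?_, fun x' hx' => ?_⟩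
  · show v1 u x y ≤ v1 u x y'
    rw [hv]; exact h1.2 y' hy'
  · show v1 u x' y ≤ v1 u x y
    rw [hv]; exact h2.2 x' hx'

theorem opt_of_isNash {u : A1 → A2 → ℝ} {p0 p : (A1 → ℝ) × (A2 → ℝ)}
    (hp0 : isNash u p0) (hp : isNash u p) :
    Opt1 u (v1 u p0.1 p0.2) p.1 ∧ Opt2 u (v1 u p0.1 p0.2) p.2 ∧
      v1 u p.1 p.2 = v1 u p0.1 p0.2 := by
  have a1 : v1 u p.1 p.2 ≤ v1 u p.1 p0.2 := hp.2.2.1 p0.2 hp0.2.1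
  have a2 : v1 u p.1 p0.2 ≤ v1 u p0.1 p0.2 := hp0.2.2.2 p.1 hp.1
  have b1 : v1 u p0.1 p.2 ≤ v1 u p.1 p.2 := hp.2.2.2 p0.1 hp0.1
  have b2 : v1 u p0.1 p0.2 ≤ v1 u p0.1 p.2 := hp0.2.2.1 p.2 hp.2.1
  have hv : v1 u p.1 p.2 = v1 u p0.1 p0.2 := le_antisymm (le_trans a1 a2) (le_trans b2 b1)
  refine ⟨⟨hp.1, fun y hy => ?_⟩, ⟨hp.2.1, fun x hx => ?_⟩, hv⟩
  · rw [← hv]; exact hp.2.2.1 y hy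
  · rw [← hv]; exact hp.2.2.2 x hx

theorem opt2_iff {u : A1 → A2 → ℝ} {v : ℝ} {y : A2 → ℝ} (hy : isSimplex y) :
    Opt2 u v y ↔ ∀ a, q1 u y a ≤ v := by
  classical
  constructor
  · intro h a
    have := h.2 (Pi.single a 1) (isSimplex_single a)
    rwa [v1_pure_left] at this
  · intro h
    refine ⟨hy, fun x hx => ?_⟩
    rw [v1_eq_sum_q1]
    calc ∑ a, x a * q1 u y a ≤ ∑ a, x a * v :=
          Finset.sum_le_sum fun a _ => mul_le_mul_of_nonneg_left (h a) (hx.1 a)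
      _ = v := by rw [← Finset.sum_mul, hx.2, one_mul]

theorem opt1_iff {u : A1 → A2 → ℝ} {v : ℝ} {x : A1 → ℝ} (hx : isSimplex x) :
    Opt1 u v x ↔ ∀ b, q2 u x b ≤ -v := by
  classical
  constructor
  · intro h b
    have := h.2 (Pi.single b 1) (isSimplex_single b)
    rw [v1_pure_right] at this
    linarith
  · intro h
    refine ⟨hx, fun y hy => ?_⟩
    have hsum := sum_q2_eq u x y
    have : ∑ b, y b * q2 u x b ≤ ∑ b, y b * (-v) :=
      Finset.sum_le_sum fun b _ => mul_le_mul_of_nonneg_left (h b) (hy.1 b)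
    rw [hsum, ← Finset.sum_mul, hy.2, one_mul] at this
    linarith

variable [Nonempty A1] [Nonempty A2]

theorem continuous_q1_y (u : A1 → A2 → ℝ) (a : A1) :
    Continuous fun y : A2 → ℝ => q1 u y a := by
  unfold q1
  exact continuous_finset_sum _ fun b _ => (continuous_apply b).mul continuous_const

/-- von Neumann minimax: existence of a Nash equilibrium. -/
theorem exists_nash (u : A1 → A2 → ℝ) : ∃ pr : (A1 → ℝ) × (A2 → ℝ), isNash u pr := by
  classical
  have hne : (Finset.univ : Finset A1).Nonempty := Finset.univ_nonempty
  set g : (A2 → ℝ) → ℝ := fun y => Finset.univ.sup' hne (fun a => q1 u y a) with hg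
  have hgcont : Continuous g :=
    Continuous.finset_sup'_apply hne (fun a _ => continuous_q1_y u a)
  have hS2ne : (stdSimplex ℝ A2).Nonempty :=
    ⟨Pi.single (Classical.arbitrary A2) 1, isSimplex_single _⟩
  obtain ⟨y0, hy0, hymin⟩ :=
    (isCompact_stdSimplex ℝ A2).exists_isMinOn hS2ne hgcont.continuousOn
  set w : ℝ := g y0 with hw
  have hy0s : isSimplex y0 := hy0
  -- the linear map y ↦ (q1 u y ·)
  set L : (A2 → ℝ) →ₗ[ℝ] (A1 → ℝ) :=
    { toFun := fun y a => q1 u y a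
      map_add' := by
        intro y y'; funext a; unfold q1
        simp only [Pi.add_apply, add_mul]
        rw [Finset.sum_add_distrib]
      map_smul' := by
        intro c y; funext a; unfold q1
        simp only [Pi.smul_apply, smul_eq_mul, RingHom.id_apply]
        rw [Finset.mul_sum]
        exact Finset.sum_congr rfl fun b _ => by ring } with hL
  set D : Set (A1 → ℝ) := L '' (stdSimplex ℝ A2) with hD
  set O : Set (A1 → ℝ) := {z | ∀ a, z a < w} with hO
  have hDconv : Convex ℝ D := (convex_stdSimplex ℝ A2).linear_image L
  have hOconv : Convex ℝ O := by
    have : O = ⋂ a, {z : A1 → ℝ | z a < w} := by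
      ext z; simp [hO, Set.mem_iInter]
    rw [this]
    exact convex_iInter fun a =>
      convex_halfSpace_lt ⟨fun z z' => rfl, fun c z => rfl⟩ w
  have hOopen : IsOpen O := by
    have : O = ⋂ a, {z : A1 → ℝ | z a < w} := by
      ext z; simp [hO, Set.mem_iInter]
    rw [this]
    exact isOpen_iInter_of_finite fun a => isOpen_lt (continuous_apply a) continuous_const
  have hdisj : Disjoint O D := by
    rw [Set.disjoint_left]
    rintro z hz ⟨y, hy, rfl⟩
    have h1 : g y < w := by
      rw [hg]
      rw [Finset.sup'_lt_iff]
      intro a _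
      exact hz a
    exact absurd (hymin hy) (not_le.2 h1)
  obtain ⟨f, c, hfO, hfD⟩ := geometric_hahn_banach_open hOconv hOopen hDconv hdisj
  set φ : A1 → ℝ := fun a => f (Pi.single a 1) with hφdef
  have hf_eq : ∀ z : A1 → ℝ, f z = ∑ a, z a * φ a := by
    intro z
    have hz := pi_eq_sum_univ z
    conv_lhs => rw [hz]
    rw [map_sum]
    refine Finset.sum_congr rfl fun a _ => ?_
    rw [map_smul, smul_eq_mul]
    congr 1
    show f (fun j => if a = j then 1 else 0) = f (Pi.single a 1)
    congr 1
    funext j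
    rw [Pi.single_apply]
    by_cases h : a = j
    · simp [h]
    · simp [h, Ne.symm h]
  have hconst : ∀ s : ℝ, f (fun _ => s) = s * ∑ a, φ a := by
    intro s
    rw [hf_eq, Finset.mul_sum]
  have hφ : ∀ a, 0 ≤ φ a := by
    by_contra hcon
    push_neg at hcon
    obtain ⟨a0, ha0⟩ := hcon
    have hz : ∀ t : ℝ, 0 ≤ t →
        f (fun j => (w - 1) + t * ((Pi.single a0 (1:ℝ) : A1 → ℝ) j) * (-1)) < c := by
      intro t ht
      apply hfO
      intro a
      by_cases h : a = a0
      · subst h; simp only [Pi.single_eq_same, mul_one]; nlinarith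
      · simp only [Pi.single_apply, if_neg h]; norm_num
    have hval : ∀ t : ℝ, f (fun j => (w - 1) + t * ((Pi.single a0 (1:ℝ) : A1 → ℝ) j) * (-1))
        = (w - 1) * (∑ a, φ a) - t * φ a0 := by
      intro t
      rw [hf_eq]
      have : ∀ a ∈ Finset.univ, ((w - 1) + t * ((Pi.single a0 (1:ℝ) : A1 → ℝ) a) * (-1)) * φ a
          = (w - 1) * φ a - t * (if a = a0 then φ a0 else 0) := by
        intro a _
        by_cases h : a = a0
        · subst h; simp [Pi.single_eq_same]; ring
        · simp only [Pi.single_apply, if_neg h]; ring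
      rw [Finset.sum_congr rfl this, Finset.sum_sub_distrib, ← Finset.mul_sum, ← Finset.mul_sum]
      congr 2
      rw [Finset.sum_ite_eq' Finset.univ a0 (fun _ => φ a0)]
      simp
    have h0 : (w - 1) * (∑ a, φ a) < c := by
      have := hz 0 le_rfl
      rwa [hval 0, zero_mul, sub_zero] at this
    set t0 : ℝ := (c - (w - 1) * (∑ a, φ a) + 1) / (-φ a0) with ht0
    have ht0pos : 0 < t0 := div_pos (by linarith) (by linarith)
    have := hz t0 ht0pos.le
    rw [hval t0] at this
    have hane : φ a0 ≠ 0 := ne_of_lt ha0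
    have ht0val : t0 * φ a0 = -(c - (w - 1) * (∑ a, φ a) + 1) := by
      rw [ht0, div_mul_eq_mul_div, mul_div_assoc, div_neg, div_self hane]
      ring
    rw [ht0val] at this
    linarith
  have hDne : D.Nonempty := ⟨L y0, y0, hy0, rfl⟩
  have hsum_pos : 0 < ∑ a, φ a := by
    rcases lt_or_eq_of_le (Finset.sum_nonneg fun a _ => hφ a) with h | h
    · exact h
    · exfalso
      have hzero : ∀ a, φ a = 0 := by
        intro a
        exact (Finset.sum_eq_zero_iff_of_nonneg fun a _ => hφ a).1 h.symm a (Finset.mem_univ a)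
      have hf0 : ∀ z, f z = 0 := by
        intro z; rw [hf_eq]; simp [hzero]
      obtain ⟨d, hd⟩ := hDne
      have h1 : (0:ℝ) < c := by
        have := hfO (fun _ => w - 1) (fun a => by norm_num)
        rwa [hf0] at this
      have h2 : c ≤ 0 := by
        have := hfD d hd
        rwa [hf0] at this
      linarith
  set S : ℝ := ∑ a, φ a with hS
  set x : A1 → ℝ := fun a => φ a / S with hx
  have hxs : isSimplex x := by
    constructor
    · intro a; exact div_nonneg (hφ a) hsum_pos.le
    · rw [hx, ← Finset.sum_div]
      exact div_self (ne_of_gt hsum_pos)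
  have hwc : w * S ≤ c := by
    by_contra hcon
    push_neg at hcon
    have hεpos : 0 < (w * S - c) / S := div_pos (by linarith) hsum_pos
    have hmem : (fun _ : A1 => w - (w * S - c) / S) ∈ O := by
      intro a; show w - (w * S - c) / S < w; linarith
    have h5 := hfO _ hmem
    rw [hconst] at h5
    have h6 : (w - (w * S - c) / S) * S = c := by
      field_simp
      ring
    linarith
  have hxguar : ∀ y, isSimplex y → w ≤ v1 u x y := by
    intro y hy
    have hmemD : L y ∈ D := ⟨y, hy, rfl⟩
    have h1 : c ≤ ∑ a, q1 u y a * φ a := by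
      have := hfD _ hmemD
      rwa [hf_eq] at this
    have h2 : v1 u x y = (∑ a, q1 u y a * φ a) / S := by
      rw [v1_eq_sum_q1, Finset.sum_div]
      exact Finset.sum_congr rfl fun a _ => by rw [hx]; ring
    rw [h2, le_div_iff₀ hsum_pos]
    calc w * S ≤ c := hwc
      _ ≤ _ := h1
  -- conclude
  have hq1y0 : ∀ a, q1 u y0 a ≤ w := fun a => Finset.le_sup' _ (Finset.mem_univ a)
  have hvxy0 : v1 u x y0 = w := by
    refine le_antisymm ?_ (hxguar y0 hy0s)
    rw [v1_eq_sum_q1]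
    calc ∑ a, x a * q1 u y0 a ≤ ∑ a, x a * w :=
          Finset.sum_le_sum fun a _ => mul_le_mul_of_nonneg_left (hq1y0 a) (hxs.1 a)
      _ = w := by rw [← Finset.sum_mul, hxs.2, one_mul]
  refine ⟨(x, y0), hxs, hy0s, fun y hy => ?_, fun x' hx' => ?_⟩
  · show v1 u x y0 ≤ v1 u x y
    rw [hvxy0]; exact hxguar y hy
  · show v1 u x' y0 ≤ v1 u x y0
    rw [hvxy0, v1_eq_sum_q1]
    calc ∑ a, x' a * q1 u y0 a ≤ ∑ a, x' a * w :=
          Finset.sum_le_sum fun a _ => mul_le_mul_of_nonneg_left (hq1y0 a) (hx'.1 a)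
      _ = w := by rw [← Finset.sum_mul, hx'.2, one_mul]

end Exist
section Cone

variable {B : Type*} [Fintype B]

theorem cone_carath {I : Type*} [Fintype I] [DecidableEq I] (G : I → (B → ℝ)) :
    ∀ (n : ℕ) (c : I → ℝ), (∀ i, 0 ≤ c i) →
      (Finset.univ.filter (fun i => c i ≠ 0)).card ≤ n →
      ∃ (s : Finset I) (c' : I → ℝ), LinearIndependent ℝ (fun i : s => G i) ∧
        (∀ i, 0 ≤ c' i) ∧ (∀ i, i ∉ s → c' i = 0) ∧
        ∑ i, c' i • G i = ∑ i, c i • G i := by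
  intro n
  induction n with
  | zero =>
    intro c hc hcard
    have hall : ∀ i, c i = 0 := by
      intro i
      by_contra h
      have hmem : i ∈ Finset.univ.filter (fun i => c i ≠ 0) := by simp [h]
      have := Finset.card_pos.2 ⟨i, hmem⟩
      omega
    exact ⟨∅, c, linearIndependent_empty_type, hc, fun i _ => hall i, rfl⟩
  | succ n IH =>
    intro c hc hcard
    set s := Finset.univ.filter (fun i => c i ≠ 0) with hs
    have hciz : ∀ i, i ∉ s → c i = 0 := by
      intro i hi
      by_contra h
      exact hi (by simp [hs, h])
    by_cases hind : LinearIndependent ℝ (fun i : s => G i)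
    · exact ⟨s, c, hind, hc, hciz, rfl⟩
    · have hmain : ∀ d : I → ℝ, (∀ i, i ∉ s → d i = 0) → ∑ i, d i • G i = 0 →
          (∃ j, 0 < d j) →
          ∃ (s' : Finset I) (c' : I → ℝ), LinearIndependent ℝ (fun i : s' => G i) ∧
            (∀ i, 0 ≤ c' i) ∧ (∀ i, i ∉ s' → c' i = 0) ∧
            ∑ i, c' i • G i = ∑ i, c i • G i := by
        rintro d hdz hdsum ⟨j0, hj0⟩
        have hj0s : j0 ∈ s := by
          by_contra h
          rw [hdz j0 h] at hj0
          exact lt_irrefl 0 hj0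
        set T := s.filter (fun i => 0 < d i) with hT
        have hj0T : j0 ∈ T := by
          rw [hT, Finset.mem_filter]; exact ⟨hj0s, hj0⟩
        obtain ⟨im, himT, hmin⟩ :=
          T.exists_min_image (fun i => c i / d i) ⟨j0, hj0T⟩
        have hdim : 0 < d im := (Finset.mem_filter.1 himT).2
        have hims : im ∈ s := (Finset.mem_filter.1 himT).1
        set ts := c im / d im with hts
        have hts0 : 0 ≤ ts := div_nonneg (hc im) hdim.le
        set c' : I → ℝ := fun i => c i - ts * d i with hc'
        have hc'0 : ∀ i, 0 ≤ c' i := by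
          intro i
          show 0 ≤ c i - ts * d i
          by_cases hdi : 0 < d i
          · have hiT : i ∈ T := by
              rw [hT, Finset.mem_filter]
              refine ⟨?_, hdi⟩
              by_contra h
              rw [hdz i h] at hdi
              exact lt_irrefl 0 hdi
            have h1 : ts ≤ c i / d i := hmin i hiT
            have h2 : ts * d i ≤ c i := by
              rw [← div_mul_cancel₀ (c i) (ne_of_gt hdi)]
              exact mul_le_mul_of_nonneg_right h1 hdi.le
            linarith
          · push_neg at hdi
            nlinarith [hc i, mul_nonpos_of_nonneg_of_nonpos hts0 hdi]
        have hcim : c' im = 0 := by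
          show c im - ts * d im = 0
          rw [hts, div_mul_cancel₀ (c im) (ne_of_gt hdim)]
          ring
        have hsum' : ∑ i, c' i • G i = ∑ i, c i • G i := by
          have heq : ∀ i ∈ Finset.univ, c' i • G i = c i • G i - ts • (d i • G i) := by
            intro i _
            show (c i - ts * d i) • G i = _
            rw [sub_smul, smul_smul]
          rw [Finset.sum_congr rfl heq, Finset.sum_sub_distrib, ← Finset.smul_sum, hdsum,
            smul_zero, sub_zero]
        have hsupp : Finset.univ.filter (fun i => c' i ≠ 0) ⊆ s.erase im := by
          intro i hi
          rw [Finset.mem_filter] at hi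
          refine Finset.mem_erase.2 ⟨?_, ?_⟩
          · intro h; subst h; exact hi.2 hcim
          · by_contra h
            exact hi.2 (by show c i - ts * d i = 0; rw [hciz i h, hdz i h]; ring)
        have hcard' : (Finset.univ.filter (fun i => c' i ≠ 0)).card ≤ n := by
          have h1 := Finset.card_le_card hsupp
          have h2 : (s.erase im).card = s.card - 1 := Finset.card_erase_of_mem hims
          have h3 : 0 < s.card := Finset.card_pos.2 ⟨im, hims⟩
          omega
        obtain ⟨s', c'', hind', hc''0, hc''z, hsum''⟩ := IH c' hc'0 hcard'
        exact ⟨s', c'', hind', hc''0, hc''z, hsum''.trans hsum'⟩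
      obtain ⟨d0, hd0sum, i0, hi0⟩ := Fintype.not_linearIndependent_iff.1 hind
      set d : I → ℝ := fun i => if h : i ∈ s then d0 ⟨i, h⟩ else 0 with hd
      have hdz : ∀ i, i ∉ s → d i = 0 := by
        intro i hi; show dite _ _ _ = 0; rw [dif_neg hi]
      have hdsum : ∑ i, d i • G i = 0 := by
        have h1 : ∑ i ∈ s, d i • G i = ∑ i, d i • G i :=
          Finset.sum_subset (Finset.subset_univ s)
            (fun i _ hi => by rw [hdz i hi, zero_smul])
        rw [← h1, ← Finset.sum_coe_sort s (fun i => d i • G i)]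
        have h2 : ∀ i : s, d (i : I) • G (i : I) = d0 i • G (i : I) := by
          intro i
          congr 1
          show dite _ _ _ = d0 i
          rw [dif_pos i.2]
        rw [Finset.sum_congr rfl (fun i _ => h2 i)]
        exact hd0sum
      have hdi0 : d (i0 : I) = d0 i0 := by
        show dite _ _ _ = d0 i0
        rw [dif_pos i0.2]
      rcases (Ne.lt_or_gt hi0) with hneg | hpos
      · refine hmain (fun i => -(d i)) (fun i hi => by show -(d i) = 0; rw [hdz i hi]; ring) ?_ ?_
        · have h5 : ∑ i, (-(d i)) • G i = -∑ i, d i • G i := by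
            rw [← Finset.sum_neg_distrib]
            exact Finset.sum_congr rfl fun i _ => by rw [neg_smul]
          rw [h5, hdsum, neg_zero]
        · exact ⟨i0, by show 0 < -(d (i0:I)); rw [hdi0]; linarith⟩
      · exact hmain d hdz hdsum ⟨i0, by rw [hdi0]; exact hpos⟩

theorem cone_closed {I : Type*} [Fintype I] (G : I → (B → ℝ)) :
    IsClosed {x : B → ℝ | ∃ c : I → ℝ, (∀ i, 0 ≤ c i) ∧ x = ∑ i, c i • G i} := by
  classical
  have hKeq : {x : B → ℝ | ∃ c : I → ℝ, (∀ i, 0 ≤ c i) ∧ x = ∑ i, c i • G i} =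
      ⋃ s ∈ {s : Finset I | LinearIndependent ℝ (fun i : s => G i)},
        (fun c : s → ℝ => ∑ i : s, c i • G (i : I)) '' {c | ∀ i, 0 ≤ c i} := by
    ext x
    simp only [Set.mem_setOf_eq, Set.mem_iUnion, Set.mem_image]
    constructor
    · rintro ⟨c, hc, rfl⟩
      obtain ⟨s, c', hind, hc', hsupp, hsum⟩ :=
        cone_carath G ((Finset.univ.filter (fun i => c i ≠ 0)).card) c hc le_rfl
      refine ⟨s, hind, fun i => c' (i : I), fun i => hc' _, ?_⟩
      rw [← hsum, Finset.sum_coe_sort s (fun i => c' i • G i)]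
      exact Finset.sum_subset (Finset.subset_univ s)
        (fun i _ hi => by rw [hsupp i hi, zero_smul])
    · rintro ⟨s, hind, c, hc, rfl⟩
      refine ⟨fun i => if h : i ∈ s then c ⟨i, h⟩ else 0, fun i => ?_, ?_⟩
      · show (0:ℝ) ≤ if h : i ∈ s then c ⟨i, h⟩ else 0
        by_cases h : i ∈ s
        · rw [dif_pos h]; exact hc _
        · rw [dif_neg h]
      · have h1 : ∑ i ∈ s, (if h : i ∈ s then c ⟨i, h⟩ else 0) • G i
            = ∑ i, (if h : i ∈ s then c ⟨i, h⟩ else 0) • G i :=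
          Finset.sum_subset (Finset.subset_univ s)
            (fun i _ hi => by rw [dif_neg hi, zero_smul])
        rw [← h1, ← Finset.sum_coe_sort s
          (fun i => (if h : i ∈ s then c ⟨i, h⟩ else 0) • G i)]
        exact (Finset.sum_congr rfl (fun i _ => by rw [dif_pos i.2])).symm
  rw [hKeq]
  refine Set.Finite.isClosed_biUnion (Set.toFinite _) (fun s hs => ?_)
  set T : (s → ℝ) →ₗ[ℝ] (B → ℝ) :=
    { toFun := fun c => ∑ i : s, c i • G (i : I)
      map_add' := by
        intro c c'
        rw [← Finset.sum_add_distrib]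
        exact Finset.sum_congr rfl fun i _ => by rw [Pi.add_apply, add_smul]
      map_smul' := by
        intro m c
        rw [RingHom.id_apply, Finset.smul_sum]
        exact Finset.sum_congr rfl fun i _ => by rw [Pi.smul_apply, smul_smul, smul_eq_mul] } with hT
  have hinj : Function.Injective T := by
    rw [← LinearMap.ker_eq_bot, LinearMap.ker_eq_bot']
    intro c hc0
    have h1 : ∀ i : s, c i = 0 := by
      apply Fintype.linearIndependent_iff.1 hs
      exact hc0
    funext i
    exact h1 i
  have hemb := LinearMap.isClosedEmbedding_of_injective (LinearMap.ker_eq_bot.2 hinj)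
  have horth : IsClosed {c : s → ℝ | ∀ i, 0 ≤ c i} := by
    have : {c : s → ℝ | ∀ i, 0 ≤ c i} = ⋂ i, {c : s → ℝ | 0 ≤ c i} := by
      ext c; simp [Set.mem_iInter]
    rw [this]
    exact isClosed_iInter fun i => isClosed_le continuous_const (continuous_apply i)
  have himg : (fun c : s → ℝ => ∑ i : s, c i • G (i : I)) '' {c | ∀ i, 0 ≤ c i}
      = T '' {c | ∀ i, 0 ≤ c i} := rfl
  rw [himg]
  exact hemb.isClosedMap _ horth

end Cone
section BKS

theorem clm_eq_sum {A : Type*} [Fintype A] [DecidableEq A] (f : (A → ℝ) →L[ℝ] ℝ) (z : A → ℝ) :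
    f z = ∑ a, z a * f (Pi.single a 1) := by
  classical
  have hz := pi_eq_sum_univ z
  conv_lhs => rw [hz]
  rw [map_sum]
  refine Finset.sum_congr rfl fun a _ => ?_
  rw [map_smul, smul_eq_mul]
  congr 1
  show f (fun j => if a = j then 1 else 0) = f (Pi.single a 1)
  congr 1
  funext j
  rw [Pi.single_apply]
  by_cases h : a = j
  · simp [h]
  · simp [h, Ne.symm h]

variable {A1 A2 : Type*} [Fintype A1] [Fintype A2] [Nonempty A1] [Nonempty A2]

theorem bks (u : A1 → A2 → ℝ) (v : ℝ) (a0 : A1)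
    (hno : ¬ ∃ y, Opt2 u v y ∧ q1 u y a0 < v) :
    ∃ x, Opt1 u v x ∧ 0 < x a0 := by
  classical
  set G : (A1 ⊕ A2) → (A2 → ℝ) :=
    Sum.elim (fun a => fun b => u a b - v)
      (fun b' => fun b => -(if b = b' then (1:ℝ) else 0)) with hG
  set K := {z : A2 → ℝ | ∃ c : (A1 ⊕ A2) → ℝ, (∀ i, 0 ≤ c i) ∧ z = ∑ i, c i • G i} with hK
  by_cases hmem : (fun b => v - u a0 b) ∈ K
  · obtain ⟨c, hcpos, hrep⟩ := hmem
    have hid : ∀ b, v - u a0 b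
        = (∑ a, c (Sum.inl a) * (u a b - v)) - c (Sum.inr b) := by
      intro b
      have h1 := congrFun hrep b
      rw [Finset.sum_apply, Fintype.sum_sum_type] at h1
      have h3 : ∀ a ∈ Finset.univ,
          (c (Sum.inl a) • G (Sum.inl a)) b = c (Sum.inl a) * (u a b - v) := by
        intro a _
        rw [hG]
        simp [smul_eq_mul]
      have h4 : ∀ b' ∈ Finset.univ, (c (Sum.inr b') • G (Sum.inr b')) b
          = -(if b = b' then c (Sum.inr b') else 0) := by
        intro b' _
        rw [hG]
        by_cases h : b = b' <;> simp [h, smul_eq_mul]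
      rw [Finset.sum_congr rfl h3, Finset.sum_congr rfl h4, Finset.sum_neg_distrib,
        Finset.sum_ite_eq] at h1
      simp only [Finset.mem_univ, if_true] at h1
      linarith [h1]
    set Λ : ℝ := ∑ a, c (Sum.inl a) with hΛ
    have hΛ0 : 0 ≤ Λ := Finset.sum_nonneg fun a _ => hcpos _
    have hden : (0:ℝ) < 1 + Λ := by linarith
    set x : A1 → ℝ := fun a => ((if a = a0 then (1:ℝ) else 0) + c (Sum.inl a)) / (1 + Λ)
      with hx
    have hxs : isSimplex x := by
      constructor
      · intro a
        refine div_nonneg (add_nonneg ?_ (hcpos _)) hden.le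
        by_cases h : a = a0 <;> simp [h]
      · show ∑ a, ((if a = a0 then (1:ℝ) else 0) + c (Sum.inl a)) / (1 + Λ) = 1
        rw [← Finset.sum_div, Finset.sum_add_distrib, Finset.sum_ite_eq' Finset.univ a0
          (fun _ => (1:ℝ))]
        simp only [Finset.mem_univ, if_true]
        rw [← hΛ]
        field_simp
    have hguar : ∀ y, isSimplex y → v ≤ v1 u x y := by
      intro y hy
      have e3 : ∀ a : A1, ∑ b, y b * (u a b - v) = q1 u y a - v := by
        intro a
        have h1 : ∀ b ∈ Finset.univ, y b * (u a b - v) = y b * u a b - v * y b :=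
          fun b _ => by ring
        rw [Finset.sum_congr rfl h1, Finset.sum_sub_distrib, ← Finset.mul_sum, hy.2, mul_one]
        rfl
      have e1 : ∑ b, y b * (v - u a0 b) = v - q1 u y a0 := by
        have h1 : ∀ b ∈ Finset.univ, y b * (v - u a0 b) = v * y b - y b * u a0 b :=
          fun b _ => by ring
        rw [Finset.sum_congr rfl h1, Finset.sum_sub_distrib, ← Finset.mul_sum, hy.2, mul_one]
        rfl
      have e2 : ∑ b, y b * ((∑ a, c (Sum.inl a) * (u a b - v)) - c (Sum.inr b))
          = (∑ a, c (Sum.inl a) * (q1 u y a - v)) - ∑ b, y b * c (Sum.inr b) := by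
        have h1 : ∀ b ∈ Finset.univ,
            y b * ((∑ a, c (Sum.inl a) * (u a b - v)) - c (Sum.inr b))
            = (∑ a, c (Sum.inl a) * (y b * (u a b - v))) - y b * c (Sum.inr b) := by
          intro b _
          rw [mul_sub, Finset.mul_sum]
          congr 1
          exact Finset.sum_congr rfl fun a _ => by ring
        rw [Finset.sum_congr rfl h1, Finset.sum_sub_distrib]
        congr 1
        rw [Finset.sum_comm]
        exact Finset.sum_congr rfl fun a _ => by rw [← Finset.mul_sum, e3 a]
      have hsum : v - q1 u y a0
          = (∑ a, c (Sum.inl a) * (q1 u y a - v)) - ∑ b, y b * c (Sum.inr b) := by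
        rw [← e1, ← e2]
        exact Finset.sum_congr rfl fun b _ => by rw [← hid b]
      have e4 : ∑ a, c (Sum.inl a) * (q1 u y a - v)
          = (∑ a, c (Sum.inl a) * q1 u y a) - Λ * v := by
        have h1 : ∀ a ∈ Finset.univ, c (Sum.inl a) * (q1 u y a - v)
            = c (Sum.inl a) * q1 u y a - v * c (Sum.inl a) := fun a _ => by ring
        rw [Finset.sum_congr rfl h1, Finset.sum_sub_distrib, ← Finset.mul_sum, ← hΛ]
        ring
      have hq2 : 0 ≤ ∑ b, y b * c (Sum.inr b) :=
        Finset.sum_nonneg fun b _ => mul_nonneg (hy.1 b) (hcpos _)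
      have hkey : v * (1 + Λ) ≤ q1 u y a0 + ∑ a, c (Sum.inl a) * q1 u y a := by
        rw [e4] at hsum
        nlinarith [hsum, hq2]
      have hv1 : v1 u x y * (1 + Λ) = q1 u y a0 + ∑ a, c (Sum.inl a) * q1 u y a := by
        rw [v1_eq_sum_q1, Finset.sum_mul]
        have h1 : ∀ a ∈ Finset.univ, x a * q1 u y a * (1 + Λ)
            = (if a = a0 then q1 u y a else 0) + c (Sum.inl a) * q1 u y a := by
          intro a _
          show ((if a = a0 then (1:ℝ) else 0) + c (Sum.inl a)) / (1 + Λ) * q1 u y a * (1 + Λ)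
            = (if a = a0 then q1 u y a else 0) + c (Sum.inl a) * q1 u y a
          rw [div_mul_eq_mul_div, div_mul_cancel₀ _ (ne_of_gt hden)]
          by_cases h : a = a0
          · rw [if_pos h, if_pos h]; ring
          · rw [if_neg h, if_neg h]; ring
        rw [Finset.sum_congr rfl h1, Finset.sum_add_distrib,
          Finset.sum_ite_eq' Finset.univ a0 (fun a => q1 u y a)]
        simp only [Finset.mem_univ, if_true]
      have := hkey.trans_eq hv1.symm
      exact le_of_mul_le_mul_right this hden
    refine ⟨x, ⟨hxs, hguar⟩, ?_⟩
    show 0 < ((if a0 = a0 then (1:ℝ) else 0) + c (Sum.inl a0)) / (1 + Λ)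
    refine div_pos ?_ hden
    have h9 : (if a0 = a0 then (1:ℝ) else 0) = 1 := if_pos rfl
    rw [h9]
    linarith [hcpos (Sum.inl a0)]
  · exfalso
    have hKconv : Convex ℝ K := by
      rintro z ⟨cz, hcz, rfl⟩ z' ⟨cz', hcz', rfl⟩ p q hp hq hpq
      refine ⟨fun i => p * cz i + q * cz' i,
        fun i => add_nonneg (mul_nonneg hp (hcz i)) (mul_nonneg hq (hcz' i)), ?_⟩
      rw [Finset.smul_sum, Finset.smul_sum, ← Finset.sum_add_distrib]
      refine Finset.sum_congr rfl fun i _ => ?_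
      show p • (cz i • G i) + q • (cz' i • G i) = (p * cz i + q * cz' i) • G i
      rw [smul_smul, smul_smul, ← add_smul]
    have hKclosed : IsClosed K := cone_closed G
    obtain ⟨f, β, hfh, hfK⟩ := geometric_hahn_banach_point_closed hKconv hKclosed hmem
    have h0K : (0 : A2 → ℝ) ∈ K := by
      refine ⟨fun _ => 0, fun i => le_refl 0, ?_⟩
      simp
    have hβ : β < 0 := by
      have := hfK 0 h0K
      rwa [map_zero] at this
    have hfKnn : ∀ z ∈ K, (0:ℝ) ≤ f z := by
      intro z hz
      by_contra hneg
      push_neg at hneg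
      obtain ⟨cz, hcz, rfl⟩ := hz
      have ht : 0 < (β - 1) / f (∑ i, cz i • G i) :=
        div_pos_of_neg_of_neg (by linarith) hneg
      have htz : ((β - 1) / f (∑ i, cz i • G i)) • (∑ i, cz i • G i) ∈ K := by
        refine ⟨fun i => ((β - 1) / f (∑ i, cz i • G i)) * cz i,
          fun i => mul_nonneg ht.le (hcz i), ?_⟩
        rw [Finset.smul_sum]
        refine Finset.sum_congr rfl fun i _ => ?_
        show ((β - 1) / f (∑ i, cz i • G i)) • (cz i • G i)
          = ((β - 1) / f (∑ i, cz i • G i) * cz i) • G i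
        rw [smul_smul]
      have h2 := hfK _ htz
      rw [map_smul, smul_eq_mul, div_mul_cancel₀ _ (ne_of_lt hneg)] at h2
      linarith
    have hgenK : ∀ i, G i ∈ K := by
      intro i
      refine ⟨fun j => if j = i then 1 else 0, fun j => by positivity, ?_⟩
      have h1 : ∀ j ∈ Finset.univ, (if j = i then (1:ℝ) else 0) • G j
          = if j = i then G j else 0 := by
        intro j _
        by_cases h : j = i <;> simp [h]
      rw [Finset.sum_congr rfl h1, Finset.sum_ite_eq' Finset.univ i G]
      simp
    set ybar : A2 → ℝ := fun b => - f (Pi.single b 1) with hybar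
    have hybar0 : ∀ b, 0 ≤ ybar b := by
      intro b
      have h1 := hfKnn _ (hgenK (Sum.inr b))
      have h2 : G (Sum.inr b) = - Pi.single b 1 := by
        rw [hG]
        funext j
        simp [Pi.single_apply]
      rw [h2, map_neg] at h1
      show 0 ≤ -f (Pi.single b 1)
      linarith
    have hfval : ∀ a : A1, f (fun b => u a b - v)
        = -(∑ b, ybar b * (u a b - v)) := by
      intro a
      rw [clm_eq_sum]
      rw [← Finset.sum_neg_distrib]
      refine Finset.sum_congr rfl fun b _ => ?_
      show (u a b - v) * f (Pi.single b 1) = -(-f (Pi.single b 1) * (u a b - v))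
      ring
    have hrows : ∀ a, q1 u ybar a ≤ v * ∑ b, ybar b := by
      intro a
      have h1 := hfKnn _ (hgenK (Sum.inl a))
      have h2 : G (Sum.inl a) = fun b => u a b - v := by rw [hG]; rfl
      rw [h2, hfval a] at h1
      have h3 : ∑ b, ybar b * (u a b - v) = q1 u ybar a - v * ∑ b, ybar b := by
        have h4 : ∀ b ∈ Finset.univ, ybar b * (u a b - v) = ybar b * u a b - v * ybar b :=
          fun b _ => by ring
        rw [Finset.sum_congr rfl h4, Finset.sum_sub_distrib, ← Finset.mul_sum]
        rfl
      rw [h3] at h1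
      linarith
    have hstrict : q1 u ybar a0 < v * ∑ b, ybar b := by
      have h1 : f (fun b => v - u a0 b) < 0 := lt_trans hfh hβ
      rw [clm_eq_sum] at h1
      have h4 : ∀ b ∈ Finset.univ, (v - u a0 b) * f (Pi.single b 1)
          = ybar b * u a0 b - v * ybar b := by
        intro b _
        show (v - u a0 b) * f (Pi.single b 1)
          = -f (Pi.single b 1) * u a0 b - v * -f (Pi.single b 1)
        ring
      rw [Finset.sum_congr rfl h4, Finset.sum_sub_distrib, ← Finset.mul_sum] at h1
      have h5 : ∑ b, ybar b * u a0 b = q1 u ybar a0 := rfl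
      rw [h5] at h1
      linarith
    set sy : ℝ := ∑ b, ybar b with hsy
    have hsy0 : 0 ≤ sy := Finset.sum_nonneg fun b _ => hybar0 b
    have hsypos : 0 < sy := by
      rcases lt_or_eq_of_le hsy0 with h | h
      · exact h
      · exfalso
        have hzero : ∀ b, ybar b = 0 := by
          intro b
          exact (Finset.sum_eq_zero_iff_of_nonneg fun b _ => hybar0 b).1 h.symm b
            (Finset.mem_univ b)
        have h1 : q1 u ybar a0 = 0 := by
          unfold q1
          exact Finset.sum_eq_zero fun b _ => by rw [hzero b, zero_mul]
        rw [h1, ← h, mul_zero] at hstrict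
        exact lt_irrefl 0 hstrict
    set y' : A2 → ℝ := fun b => ybar b / sy with hy'
    have hy's : isSimplex y' := by
      constructor
      · intro b; exact div_nonneg (hybar0 b) hsy0
      · show ∑ b, ybar b / sy = 1
        rw [← Finset.sum_div, ← hsy, div_self (ne_of_gt hsypos)]
    have hq1y' : ∀ a, q1 u y' a = q1 u ybar a / sy := by
      intro a
      unfold q1
      rw [Finset.sum_div]
      exact Finset.sum_congr rfl fun b _ => by rw [hy']; ring
    have hopt : Opt2 u v y' := by
      rw [opt2_iff hy's]
      intro a
      rw [hq1y' a, div_le_iff₀ hsypos]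
      exact hrows a
    refine hno ⟨y', hopt, ?_⟩
    rw [hq1y' a0, div_lt_iff₀ hsypos]
    exact hstrict

theorem strict_comp (u : A1 → A2 → ℝ) (v : ℝ) (hex : ∃ y, Opt2 u v y) :
    ∃ yh, Opt2 u v yh ∧ ∀ a, (¬ ∃ x, Opt1 u v x ∧ 0 < x a) → q1 u yh a < v := by
  classical
  set s := Finset.univ.filter (fun a : A1 => ¬ ∃ x, Opt1 u v x ∧ 0 < x a) with hsdef
  rcases Finset.eq_empty_or_nonempty s with hemp | hne
  · obtain ⟨y, hy⟩ := hex
    refine ⟨y, hy, fun a ha => ?_⟩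
    exfalso
    have : a ∈ s := by rw [hsdef, Finset.mem_filter]; exact ⟨Finset.mem_univ a, ha⟩
    rw [hemp] at this
    exact Finset.notMem_empty a this
  · have hch : ∀ a ∈ s, ∃ y, Opt2 u v y ∧ q1 u y a < v := by
      intro a ha
      rw [hsdef, Finset.mem_filter] at ha
      by_contra h
      obtain ⟨x, hx1, hx2⟩ := bks u v a h
      exact ha.2 ⟨x, hx1, hx2⟩
    choose Y hY1 hY2 using hch
    set N : ℝ := (s.card : ℝ) with hN
    have hNpos : 0 < N := by
      rw [hN]
      exact_mod_cast Finset.card_pos.2 hne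
    set yh : A2 → ℝ := fun b => (∑ a ∈ s.attach, Y a.1 a.2 b) / N with hyh
    have hyhs : isSimplex yh := by
      constructor
      · intro b
        refine div_nonneg (Finset.sum_nonneg fun a _ => (hY1 a.1 a.2).1.1 b) hNpos.le
      · show ∑ b, (∑ a ∈ s.attach, Y a.1 a.2 b) / N = 1
        rw [← Finset.sum_div, Finset.sum_comm]
        have h1 : ∀ a ∈ s.attach, ∑ b, Y a.1 a.2 b = 1 := fun a _ => (hY1 a.1 a.2).1.2
        rw [Finset.sum_congr rfl h1]
        rw [Finset.sum_const, nsmul_eq_mul, mul_one, Finset.card_attach, ← hN,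
          div_self (ne_of_gt hNpos)]
    have hq1yh : ∀ a', q1 u yh a' = (∑ a ∈ s.attach, q1 u (Y a.1 a.2) a') / N := by
      intro a'
      unfold q1
      rw [Finset.sum_div]
      have h1 : ∀ b ∈ Finset.univ, yh b * u a' b
          = ∑ a ∈ s.attach, Y a.1 a.2 b * u a' b / N := by
        intro b _
        rw [hyh, div_mul_eq_mul_div, Finset.sum_mul, Finset.sum_div]
      rw [Finset.sum_congr rfl h1, Finset.sum_comm]
      exact Finset.sum_congr rfl fun a _ => by rw [← Finset.sum_div]
    have hle : ∀ (a' : A1) (a : {x // x ∈ s}), q1 u (Y a.1 a.2) a' ≤ v := by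
      intro a' a
      exact (opt2_iff (hY1 a.1 a.2).1).1 (hY1 a.1 a.2) a'
    refine ⟨yh, ?_, ?_⟩
    · rw [opt2_iff hyhs]
      intro a'
      rw [hq1yh a', div_le_iff₀ hNpos]
      calc ∑ a ∈ s.attach, q1 u (Y a.1 a.2) a' ≤ ∑ _a ∈ s.attach, v :=
            Finset.sum_le_sum fun a _ => hle a' a
        _ = v * N := by
            rw [Finset.sum_const, nsmul_eq_mul, Finset.card_attach, hN]; ring
    · intro a' ha'
      have ha's : a' ∈ s := by rw [hsdef, Finset.mem_filter]; exact ⟨Finset.mem_univ a', ha'⟩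
      rw [hq1yh a', div_lt_iff₀ hNpos]
      have hstrict : ∑ a ∈ s.attach, q1 u (Y a.1 a.2) a' < ∑ _a ∈ s.attach, v := by
        refine Finset.sum_lt_sum (fun a _ => hle a' a) ⟨⟨a', ha's⟩, Finset.mem_attach _ _, ?_⟩
        exact hY2 a' ha's
      calc ∑ a ∈ s.attach, q1 u (Y a.1 a.2) a' < ∑ _a ∈ s.attach, v := hstrict
        _ = v * N := by
            rw [Finset.sum_const, nsmul_eq_mul, Finset.card_attach, hN]; ring

end BKS
section KLFacts

variable {A : Type*} [Fintype A]

theorem mul_log_div_ge {x c : ℝ} (hx : 0 ≤ x) (hc : 0 < c) :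
    x - c ≤ x * Real.log (x / c) := by
  rcases eq_or_lt_of_le hx with h | h
  · rw [← h]; simp; linarith
  · have h1 : Real.log (c / x) ≤ c / x - 1 := Real.log_le_sub_one_of_pos (div_pos hc h)
    have h2 : Real.log (x / c) = - Real.log (c / x) := by
      rw [← Real.log_inv]
      congr 1
      rw [inv_div]
    have h3 := mul_le_mul_of_nonneg_left h1 h.le
    have h5 : x * (c / x - 1) = c - x := by
      field_simp
    rw [h2]
    have h6 : x * -Real.log (c / x) = -(x * Real.log (c / x)) := by ring
    rw [h6]
    linarith [h3, h5]

theorem KL_nonneg {p q : A → ℝ} (hp : isSimplex p) (hq : isInterior q) : 0 ≤ KL p q := by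
  unfold KL
  have h1 : ∀ a ∈ Finset.univ, p a - q a ≤ p a * Real.log (p a / q a) :=
    fun a _ => mul_log_div_ge (hp.1 a) (hq.1 a)
  have h2 := Finset.sum_le_sum h1
  rw [Finset.sum_sub_distrib, hp.2, hq.2] at h2
  linarith

theorem kl_shift (p rr : A → ℝ) (hrr : ∀ a, 0 < rr a) :
    KL p rr = ∑ a, (p a * Real.log (p a) - p a * Real.log (rr a)) := by
  unfold KL
  refine Finset.sum_congr rfl fun a _ => ?_
  by_cases h : p a = 0
  · rw [h]; simp
  · rw [Real.log_div h (ne_of_gt (hrr a))]; ring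

theorem continuous_KL (rr : A → ℝ) (hrr : ∀ a, 0 < rr a) :
    Continuous fun p : A → ℝ => KL p rr := by
  have heq : (fun p : A → ℝ => KL p rr)
      = fun p => ∑ a, (p a * Real.log (p a) - p a * Real.log (rr a)) :=
    funext fun p => kl_shift p rr hrr
  rw [heq]
  refine continuous_finset_sum _ fun a _ => Continuous.sub ?_ ?_
  · exact Real.continuous_mul_log.comp (continuous_apply a)
  · exact (continuous_apply a).mul continuous_const

/-- Moving a little mass onto a fresh coordinate strictly decreases `KL ⬝ rr`. -/
theorem kl_support_dec {p0 p1 rr : A → ℝ} (hp0 : isSimplex p0) (hp1 : isSimplex p1)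
    (hrr : isInterior rr) {a0 : A} (h0 : p0 a0 = 0) (h1 : 0 < p1 a0) :
    ∃ t : ℝ, 0 < t ∧ t ≤ 1/2 ∧
      KL (fun a => (1-t) * p0 a + t * p1 a) rr < KL p0 rr := by
  classical
  set c := p1 a0 with hc
  set F0 := KL p0 rr with hF0
  set F1 := KL p1 rr with hF1
  have key : ∀ t : ℝ, 0 < t → t ≤ 1/2 →
      KL (fun a => (1-t) * p0 a + t * p1 a) rr
        ≤ F0 + t * ((F1 - F0) + c * Real.log t) := by
    intro t ht0 ht1
    have htle : t ≤ 1 := by linarith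
    rw [kl_shift _ rr hrr.1]
    rw [hF0, hF1, kl_shift p0 rr hrr.1, kl_shift p1 rr hrr.1]
    set κ : A → ℝ → ℝ := fun a x => x * Real.log x - x * Real.log (rr a) with hκ
    have hκ0 : ∀ a, κ a 0 = 0 := fun a => by rw [hκ]; simp
    have hconv : ∀ a : A, ∀ x y : ℝ, 0 ≤ x → 0 ≤ y →
        κ a ((1-t)*x + t*y) ≤ (1-t) * κ a x + t * κ a y := by
      intro a x y hx hy
      have h := convexOn_mul_log.2 (Set.mem_Ici.2 hx) (Set.mem_Ici.2 hy)
        (by linarith : (0:ℝ) ≤ 1 - t) ht0.le (by ring)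
      simp only [smul_eq_mul] at h
      show ((1-t)*x + t*y) * Real.log ((1-t)*x + t*y) - ((1-t)*x + t*y) * Real.log (rr a)
        ≤ (1-t) * (x * Real.log x - x * Real.log (rr a))
          + t * (y * Real.log y - y * Real.log (rr a))
      nlinarith [h]
    have hsplit : ∀ q : A → ℝ,
        ∑ a, κ a (q a) = (∑ a ∈ Finset.univ.erase a0, κ a (q a)) + κ a0 (q a0) := by
      intro q
      rw [Finset.sum_erase_add]
      exact Finset.mem_univ a0
    have hbound : ∑ a ∈ Finset.univ.erase a0, κ a ((1-t) * p0 a + t * p1 a)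
        ≤ (1-t) * ∑ a ∈ Finset.univ.erase a0, κ a (p0 a)
          + t * ∑ a ∈ Finset.univ.erase a0, κ a (p1 a) := by
      rw [Finset.mul_sum, Finset.mul_sum, ← Finset.sum_add_distrib]
      exact Finset.sum_le_sum fun a _ => hconv a (p0 a) (p1 a) (hp0.1 a) (hp1.1 a)
    have e0 : ∑ a ∈ Finset.univ.erase a0, κ a (p0 a) = ∑ a, κ a (p0 a) := by
      rw [hsplit p0, h0, hκ0, add_zero]
    have e1 : ∑ a ∈ Finset.univ.erase a0, κ a (p1 a) = (∑ a, κ a (p1 a)) - κ a0 c := by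
      rw [hsplit p1, ← hc]
      ring
    have ea0 : (1-t) * p0 a0 + t * p1 a0 = t * c := by rw [h0, ← hc]; ring
    have hκtc : κ a0 (t * c) = t * κ a0 c + t * c * Real.log t := by
      rw [hκ]
      show t * c * Real.log (t * c) - t * c * Real.log (rr a0)
        = t * (c * Real.log c - c * Real.log (rr a0)) + t * c * Real.log t
      rw [Real.log_mul (ne_of_gt ht0) (ne_of_gt h1)]
      ring
    calc ∑ a, κ a ((1-t) * p0 a + t * p1 a)
        = (∑ a ∈ Finset.univ.erase a0, κ a ((1-t) * p0 a + t * p1 a)) + κ a0 (t * c) := by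
          rw [hsplit, ea0]
      _ ≤ (1-t) * ∑ a, κ a (p0 a) + t * ((∑ a, κ a (p1 a)) - κ a0 c)
            + (t * κ a0 c + t * c * Real.log t) := by
          rw [← e0, ← e1, ← hκtc]
          linarith [hbound]
      _ = (∑ a, κ a (p0 a))
            + t * (((∑ a, κ a (p1 a)) - ∑ a, κ a (p0 a)) + c * Real.log t) := by ring
  -- choose t
  set t := min (1/2 : ℝ) (Real.exp (-((F1 - F0) + 1) / c)) with ht
  have htpos : 0 < t := lt_min (by norm_num) (Real.exp_pos _)
  have htle : t ≤ 1/2 := min_le_left _ _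
  have hlogt : Real.log t ≤ -((F1 - F0) + 1) / c := by
    have h2 : t ≤ Real.exp (-((F1 - F0) + 1) / c) := min_le_right _ _
    calc Real.log t ≤ Real.log (Real.exp (-((F1 - F0) + 1) / c)) :=
          Real.log_le_log htpos h2
      _ = -((F1 - F0) + 1) / c := Real.log_exp _
  have hclogt : c * Real.log t ≤ -((F1 - F0) + 1) := by
    have := mul_le_mul_of_nonneg_left hlogt h1.le
    rwa [mul_div_cancel₀ _ (ne_of_gt h1)] at this
  refine ⟨t, htpos, htle, ?_⟩
  have hk := key t htpos htle
  have : F0 + t * ((F1 - F0) + c * Real.log t) ≤ F0 - t := by nlinarith [hclogt, htpos]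
  calc KL (fun a => (1-t) * p0 a + t * p1 a) rr ≤ F0 + t * ((F1 - F0) + c * Real.log t) := hk
    _ ≤ F0 - t := this
    _ < F0 := by linarith

end KLFacts
section Assembly

variable {A1 A2 : Type*} [Fintype A1] [Fintype A2]

theorem opt1_comb {u : A1 → A2 → ℝ} {v : ℝ} {x x' : A1 → ℝ} (h : Opt1 u v x)
    (h' : Opt1 u v x') {t : ℝ} (h0 : 0 ≤ t) (h1 : t ≤ 1) :
    Opt1 u v (fun a => (1-t) * x a + t * x' a) :=
  ⟨isSimplex_comb h.1 h'.1 h0 h1, fun y hy => by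
    rw [v1_comb_left]
    nlinarith [h.2 y hy, h'.2 y hy]⟩

theorem opt2_comb {u : A1 → A2 → ℝ} {v : ℝ} {y y' : A2 → ℝ} (h : Opt2 u v y)
    (h' : Opt2 u v y') {t : ℝ} (h0 : 0 ≤ t) (h1 : t ≤ 1) :
    Opt2 u v (fun b => (1-t) * y b + t * y' b) :=
  ⟨isSimplex_comb h.1 h'.1 h0 h1, fun x hx => by
    rw [v1_comb_right]
    nlinarith [h.2 x hx, h'.2 x hx]⟩

theorem continuous_v1_pair (u : A1 → A2 → ℝ) :
    Continuous fun σ : (A1 → ℝ) × (A2 → ℝ) => v1 u σ.1 σ.2 := by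
  unfold v1
  exact continuous_finset_sum _ fun a _ => continuous_finset_sum _ fun b _ =>
    (((continuous_apply a).comp continuous_fst).mul
      ((continuous_apply b).comp continuous_snd)).mul continuous_const

theorem continuous_v1_fst (u : A1 → A2 → ℝ) (y : A2 → ℝ) :
    Continuous fun σ : (A1 → ℝ) × (A2 → ℝ) => v1 u σ.1 y := by
  unfold v1
  exact continuous_finset_sum _ fun a _ => continuous_finset_sum _ fun b _ =>
    (((continuous_apply a).comp continuous_fst).mul continuous_const).mul continuous_const

theorem continuous_v1_snd (u : A1 → A2 → ℝ) (x : A1 → ℝ) :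
    Continuous fun σ : (A1 → ℝ) × (A2 → ℝ) => v1 u x σ.2 := by
  unfold v1
  exact continuous_finset_sum _ fun a _ => continuous_finset_sum _ fun b _ =>
    (continuous_const.mul ((continuous_apply b).comp continuous_snd)).mul continuous_const

theorem isClosed_simplex_fst :
    IsClosed {σ : (A1 → ℝ) × (A2 → ℝ) | isSimplex σ.1} := by
  have heq : {σ : (A1 → ℝ) × (A2 → ℝ) | isSimplex σ.1}
      = (⋂ a, {σ : (A1 → ℝ) × (A2 → ℝ) | 0 ≤ σ.1 a})
        ∩ {σ : (A1 → ℝ) × (A2 → ℝ) | ∑ a, σ.1 a = 1} := by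
    ext σ
    simp [isSimplex, Set.mem_iInter]
  rw [heq]
  exact IsClosed.inter
    (isClosed_iInter fun a =>
      isClosed_le continuous_const ((continuous_apply a).comp continuous_fst))
    (isClosed_eq (continuous_finset_sum _ fun a _ => (continuous_apply a).comp continuous_fst)
      continuous_const)

theorem isClosed_simplex_snd :
    IsClosed {σ : (A1 → ℝ) × (A2 → ℝ) | isSimplex σ.2} := by
  have heq : {σ : (A1 → ℝ) × (A2 → ℝ) | isSimplex σ.2}
      = (⋂ b, {σ : (A1 → ℝ) × (A2 → ℝ) | 0 ≤ σ.2 b})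
        ∩ {σ : (A1 → ℝ) × (A2 → ℝ) | ∑ b, σ.2 b = 1} := by
    ext σ
    simp [isSimplex, Set.mem_iInter]
  rw [heq]
  exact IsClosed.inter
    (isClosed_iInter fun b =>
      isClosed_le continuous_const ((continuous_apply b).comp continuous_snd))
    (isClosed_eq (continuous_finset_sum _ fun b _ => (continuous_apply b).comp continuous_snd)
      continuous_const)

theorem isClosed_nashSet (u : A1 → A2 → ℝ) :
    IsClosed {σ : (A1 → ℝ) × (A2 → ℝ) | isNash u σ} := by
  have heq : {σ : (A1 → ℝ) × (A2 → ℝ) | isNash u σ}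
      = ({σ : (A1 → ℝ) × (A2 → ℝ) | isSimplex σ.1} ∩ {σ | isSimplex σ.2})
        ∩ ((⋂ (y : A2 → ℝ) (_ : isSimplex y), {σ : (A1 → ℝ) × (A2 → ℝ) |
              v1 u σ.1 σ.2 ≤ v1 u σ.1 y})
          ∩ (⋂ (x : A1 → ℝ) (_ : isSimplex x), {σ : (A1 → ℝ) × (A2 → ℝ) |
              v1 u x σ.2 ≤ v1 u σ.1 σ.2})) := by
    ext σ
    simp only [Set.mem_inter_iff, Set.mem_iInter, Set.mem_setOf_eq]
    constructor
    · intro h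
      exact ⟨⟨h.1, h.2.1⟩, fun y hy => h.2.2.1 y hy, fun x hx => h.2.2.2 x hx⟩
    · intro h
      exact ⟨h.1.1, h.1.2, fun y hy => h.2.1 y hy, fun x hx => h.2.2 x hx⟩
  rw [heq]
  refine IsClosed.inter (IsClosed.inter isClosed_simplex_fst isClosed_simplex_snd)
    (IsClosed.inter ?_ ?_)
  · exact isClosed_iInter fun y => isClosed_iInter fun _ =>
      isClosed_le (continuous_v1_pair u) (continuous_v1_fst u y)
  · exact isClosed_iInter fun x => isClosed_iInter fun _ =>
      isClosed_le (continuous_v1_snd u x) (continuous_v1_pair u)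

theorem isCompact_nashSet (u : A1 → A2 → ℝ) :
    IsCompact {σ : (A1 → ℝ) × (A2 → ℝ) | isNash u σ} := by
  refine IsCompact.of_isClosed_subset
    ((isCompact_stdSimplex ℝ A1).prod (isCompact_stdSimplex ℝ A2)) (isClosed_nashSet u) ?_
  rintro σ hσ
  exact ⟨hσ.1, hσ.2.1⟩

end Assembly
/-- **Lemma 4 (strict decrease of the distance to the Nash set).** -/
theorem min_kl_strict_decrease {A1 A2 : Type*}
    [Fintype A1] [Fintype A2] [Nonempty A1] [Nonempty A2]
    (u : A1 → A2 → ℝ)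
    (μ : ℝ) (hμ : 0 < μ ∧ μ ≤ 1)
    (r : (A1 → ℝ) × (A2 → ℝ)) (hr1 : isInterior r.1) (hr2 : isInterior r.2)
    (σst : (A1 → ℝ) × (A2 → ℝ)) (hst : isStationary u μ r σst)
    (hst1 : isInterior σst.1) (hst2 : isInterior σst.2) :
    (¬ isNash u r →
      sInf ((fun σ => KL2 σ σst) '' {σ | isNash u σ}) <
      sInf ((fun σ => KL2 σ r) '' {σ | isNash u σ})) ∧
    (isNash u r → σst = r) := by
  classical
  obtain ⟨hμ0, hμ1⟩ := hμ
  constructor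
  · intro hrnot
    obtain ⟨p0, hp0⟩ := exists_nash u
    set v := v1 u p0.1 p0.2 with hv
    set NS : Set ((A1 → ℝ) × (A2 → ℝ)) := {σ | isNash u σ} with hNS
    have hNSne : NS.Nonempty := ⟨p0, hp0⟩
    have hcont : Continuous fun σ : (A1 → ℝ) × (A2 → ℝ) => KL2 σ r := by
      have heq : (fun σ : (A1 → ℝ) × (A2 → ℝ) => KL2 σ r)
          = fun σ => KL σ.1 r.1 + KL σ.2 r.2 := rfl
      rw [heq]
      exact ((continuous_KL r.1 hr1.1).comp continuous_fst).add
        ((continuous_KL r.2 hr2.1).comp continuous_snd)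
    obtain ⟨ps, hpsNS, hpsmin⟩ :=
      (isCompact_nashSet u).exists_isMinOn hNSne hcont.continuousOn
    have hpsnash : isNash u ps := hpsNS
    obtain ⟨hopt1, hopt2, hval⟩ := opt_of_isNash hp0 hpsnash
    have hsupp1 : ∀ a, (∃ x, Opt1 u v x ∧ 0 < x a) → 0 < ps.1 a := by
      rintro a ⟨x, hxopt, hxa⟩
      by_contra hcc
      push_neg at hcc
      have h0 : ps.1 a = 0 := le_antisymm hcc (hpsnash.1.1 a)
      obtain ⟨t, ht0, ht1, hdec⟩ := kl_support_dec hpsnash.1 hxopt.1 hr1 h0 hxa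
      have hnash' : isNash u (fun a => (1-t) * ps.1 a + t * x a, ps.2) :=
        isNash_of_opt (opt1_comb hopt1 hxopt ht0.le (by linarith)) hopt2
      have hlt : KL2 ((fun a => (1-t) * ps.1 a + t * x a, ps.2)) r < KL2 ps r := by
        show KL (fun a => (1-t) * ps.1 a + t * x a) r.1 + KL ps.2 r.2
          < KL ps.1 r.1 + KL ps.2 r.2
        exact add_lt_add_left hdec _
      exact absurd (isMinOn_iff.1 hpsmin _ hnash') (not_le.2 hlt)
    have hsupp2 : ∀ b, (∃ y, Opt2 u v y ∧ 0 < y b) → 0 < ps.2 b := by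
      rintro b ⟨y, hyopt, hyb⟩
      by_contra hcc
      push_neg at hcc
      have h0 : ps.2 b = 0 := le_antisymm hcc (hpsnash.2.1.1 b)
      obtain ⟨t, ht0, ht1, hdec⟩ := kl_support_dec hpsnash.2.1 hyopt.1 hr2 h0 hyb
      have hnash' : isNash u (ps.1, fun b => (1-t) * ps.2 b + t * y b) :=
        isNash_of_opt hopt1 (opt2_comb hopt2 hyopt ht0.le (by linarith))
      have hlt : KL2 ((ps.1, fun b => (1-t) * ps.2 b + t * y b)) r < KL2 ps r := by
        show KL ps.1 r.1 + KL (fun b => (1-t) * ps.2 b + t * y b) r.2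
          < KL ps.1 r.1 + KL ps.2 r.2
        exact add_lt_add_right hdec _
      exact absurd (isMinOn_iff.1 hpsmin _ hnash') (not_le.2 hlt)
    have hmain : KL2 ps σst < KL2 ps r := by
      rcases lt_or_ge (KL2 ps σst) (KL2 ps r) with h | hcon
      · exact h
      exfalso
      have h11 : KL ps.1 σst.1 - KL ps.1 r.1
          = ∑ a, ps.1 a * (Real.log (r.1 a) - Real.log (σst.1 a)) := by
        rw [kl_shift ps.1 σst.1 hst1.1, kl_shift ps.1 r.1 hr1.1, ← Finset.sum_sub_distrib]
        exact Finset.sum_congr rfl fun a _ => by ring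
      have h12 : KL ps.2 σst.2 - KL ps.2 r.2
          = ∑ b, ps.2 b * (Real.log (r.2 b) - Real.log (σst.2 b)) := by
        rw [kl_shift ps.2 σst.2 hst2.1, kl_shift ps.2 r.2 hr2.1, ← Finset.sum_sub_distrib]
        exact Finset.sum_congr rfl fun b _ => by ring
      have hT1 : ∀ a ∈ Finset.univ, ps.1 a * (Real.log (r.1 a) - Real.log (σst.1 a))
          ≤ ps.1 a * (r.1 a / σst.1 a - 1) := by
        intro a _
        refine mul_le_mul_of_nonneg_left ?_ (hpsnash.1.1 a)
        rw [← Real.log_div (ne_of_gt (hr1.1 a)) (ne_of_gt (hst1.1 a))]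
        exact Real.log_le_sub_one_of_pos (div_pos (hr1.1 a) (hst1.1 a))
      have hT2 : ∀ b ∈ Finset.univ, ps.2 b * (Real.log (r.2 b) - Real.log (σst.2 b))
          ≤ ps.2 b * (r.2 b / σst.2 b - 1) := by
        intro b _
        refine mul_le_mul_of_nonneg_left ?_ (hpsnash.2.1.1 b)
        rw [← Real.log_div (ne_of_gt (hr2.1 b)) (ne_of_gt (hst2.1 b))]
        exact Real.log_le_sub_one_of_pos (div_pos (hr2.1 b) (hst2.1 b))
      have hR1 : ∑ a, ps.1 a * (r.1 a / σst.1 a - 1)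
          = (∑ a, ps.1 a * (r.1 a / σst.1 a)) - 1 := by
        have h1 : ∀ a ∈ Finset.univ, ps.1 a * (r.1 a / σst.1 a - 1)
            = ps.1 a * (r.1 a / σst.1 a) - ps.1 a := fun a _ => by ring
        rw [Finset.sum_congr rfl h1, Finset.sum_sub_distrib, hpsnash.1.2]
      have hR2 : ∑ b, ps.2 b * (r.2 b / σst.2 b - 1)
          = (∑ b, ps.2 b * (r.2 b / σst.2 b)) - 1 := by
        have h1 : ∀ b ∈ Finset.univ, ps.2 b * (r.2 b / σst.2 b - 1)
            = ps.2 b * (r.2 b / σst.2 b) - ps.2 b := fun b _ => by ring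
        rw [Finset.sum_congr rfl h1, Finset.sum_sub_distrib, hpsnash.2.1.2]
      have k1 := key1 hst hst1 hpsnash.1
      have k2 := key2 hst hst2 hpsnash.2.1
      have hXv : v ≤ v1 u ps.1 σst.2 := hopt1.2 σst.2 hst2.isSimplex'
      have hYv : v1 u σst.1 ps.2 ≤ v := hopt2.2 σst.1 hst1.isSimplex'
      have hsum1 := Finset.sum_le_sum hT1
      have hsum2 := Finset.sum_le_sum hT2
      have hgap : 0 ≤ KL2 ps σst - KL2 ps r := by linarith
      have hKLdiff : KL2 ps σst - KL2 ps r
          = (∑ a, ps.1 a * (Real.log (r.1 a) - Real.log (σst.1 a)))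
            + (∑ b, ps.2 b * (Real.log (r.2 b) - Real.log (σst.2 b))) := by
        have e : KL2 ps σst - KL2 ps r
            = (KL ps.1 σst.1 - KL ps.1 r.1) + (KL ps.2 σst.2 - KL ps.2 r.2) := by
          show (KL ps.1 σst.1 + KL ps.2 σst.2) - (KL ps.1 r.1 + KL ps.2 r.2) = _
          ring
        rw [e, h11, h12]
      have hABle : (∑ a, ps.1 a * (r.1 a / σst.1 a))
          + (∑ b, ps.2 b * (r.2 b / σst.2 b)) ≤ 2 := by
        by_contra hcon2
        push_neg at hcon2
        nlinarith [k1, k2, hXv, hYv, mul_pos hμ0 (by linarith : (0:ℝ) <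
          (∑ a, ps.1 a * (r.1 a / σst.1 a)) + (∑ b, ps.2 b * (r.2 b / σst.2 b)) - 2)]
      have hsum1eq : ∑ a, ps.1 a * (Real.log (r.1 a) - Real.log (σst.1 a))
          = ∑ a, ps.1 a * (r.1 a / σst.1 a - 1) := by linarith
      have hsum2eq : ∑ b, ps.2 b * (Real.log (r.2 b) - Real.log (σst.2 b))
          = ∑ b, ps.2 b * (r.2 b / σst.2 b - 1) := by linarith
      have hterm1 := (Finset.sum_eq_sum_iff_of_le hT1).1 hsum1eq
      have hterm2 := (Finset.sum_eq_sum_iff_of_le hT2).1 hsum2eq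
      have hre1 : ∀ a, 0 < ps.1 a → r.1 a = σst.1 a := by
        intro a hpa
        have h := hterm1 a (Finset.mem_univ a)
        have h2 : Real.log (r.1 a) - Real.log (σst.1 a) = r.1 a / σst.1 a - 1 :=
          mul_left_cancel₀ (ne_of_gt hpa) h
        by_contra hne
        have hdivne : r.1 a / σst.1 a ≠ 1 := by
          intro hdiv
          exact hne ((div_eq_one_iff_eq (ne_of_gt (hst1.1 a))).1 hdiv)
        have h3 := Real.log_lt_sub_one_of_pos (div_pos (hr1.1 a) (hst1.1 a)) hdivne
        rw [Real.log_div (ne_of_gt (hr1.1 a)) (ne_of_gt (hst1.1 a))] at h3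
        linarith
      have hre2 : ∀ b, 0 < ps.2 b → r.2 b = σst.2 b := by
        intro b hpb
        have h := hterm2 b (Finset.mem_univ b)
        have h2 : Real.log (r.2 b) - Real.log (σst.2 b) = r.2 b / σst.2 b - 1 :=
          mul_left_cancel₀ (ne_of_gt hpb) h
        by_contra hne
        have hdivne : r.2 b / σst.2 b ≠ 1 := by
          intro hdiv
          exact hne ((div_eq_one_iff_eq (ne_of_gt (hst2.1 b))).1 hdiv)
        have h3 := Real.log_lt_sub_one_of_pos (div_pos (hr2.1 b) (hst2.1 b)) hdivne
        rw [Real.log_div (ne_of_gt (hr2.1 b)) (ne_of_gt (hst2.1 b))] at h3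
        linarith
      have hA1 : ∑ a, ps.1 a * (r.1 a / σst.1 a) = 1 := by
        have h1 : ∀ a ∈ Finset.univ, ps.1 a * (r.1 a / σst.1 a) = ps.1 a := by
          intro a _
          rcases eq_or_lt_of_le (hpsnash.1.1 a) with h | h
          · rw [← h]; ring
          · rw [hre1 a h, div_self (ne_of_gt (hst1.1 a)), mul_one]
        rw [Finset.sum_congr rfl h1, hpsnash.1.2]
      have hB1 : ∑ b, ps.2 b * (r.2 b / σst.2 b) = 1 := by
        have h1 : ∀ b ∈ Finset.univ, ps.2 b * (r.2 b / σst.2 b) = ps.2 b := by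
          intro b _
          rcases eq_or_lt_of_le (hpsnash.2.1.1 b) with h | h
          · rw [← h]; ring
          · rw [hre2 b h, div_self (ne_of_gt (hst2.1 b)), mul_one]
        rw [Finset.sum_congr rfl h1, hpsnash.2.1.2]
      have hXeq : v1 u ps.1 σst.2 - v1 u σst.1 σst.2 = 0 := by
        rw [hA1] at k1
        rw [k1]; ring
      have hYeq : v1 u σst.1 σst.2 - v1 u σst.1 ps.2 = 0 := by
        rw [hB1] at k2
        rw [k2]; ring
      have hvv : v1 u σst.1 σst.2 = v := by linarith
      have hq1sup : ∀ a, 0 < ps.1 a → q1 u σst.2 a = v := by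
        intro a h
        have hk := key_q1 hst hst1 a
        rw [hre1 a h, div_self (ne_of_gt (hst1.1 a))] at hk
        have hk2 : q1 u σst.2 a - v1 u σst.1 σst.2 = 0 := by rw [hk]; ring
        linarith
      obtain ⟨yh, hyhopt, hyhstrict⟩ := strict_comp u v ⟨ps.2, hopt2⟩
      set D : A1 → ℝ := fun a => q1 u σst.2 a - q1 u yh a with hD
      set g : A1 → ℝ := fun a =>
        if 0 < D a ∧ ¬(∃ x, Opt1 u v x ∧ 0 < x a) then (v - q1 u yh a) / D a else 1 with hg
      have hga : ∀ a, g a = if 0 < D a ∧ ¬(∃ x, Opt1 u v x ∧ 0 < x a)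
          then (v - q1 u yh a) / D a else 1 := fun a => rfl
      have hDa : ∀ a, D a = q1 u σst.2 a - q1 u yh a := fun a => rfl
      have hgpos : ∀ a, 0 < g a := by
        intro a
        rw [hga a]
        split_ifs with h
        · exact div_pos (by linarith [hyhstrict a h.2]) h.1
        · norm_num
      set t := min (1/2 : ℝ) (Finset.univ.inf' Finset.univ_nonempty g) with htdef
      have ht0 : 0 < t := lt_min (by norm_num) ((Finset.lt_inf'_iff _).2 fun a _ => hgpos a)
      have ht1 : t ≤ 1 := le_trans (min_le_left _ _) (by norm_num)
      have htg : ∀ a, t ≤ g a := fun a =>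
        le_trans (min_le_right _ _) (Finset.inf'_le _ (Finset.mem_univ a))
      have hytopt : Opt2 u v (fun b => (1-t) * yh b + t * σst.2 b) := by
        rw [opt2_iff (isSimplex_comb hyhopt.1 hst2.isSimplex' ht0.le ht1)]
        intro a
        rw [q1_comb]
        by_cases hN : ∃ x, Opt1 u v x ∧ 0 < x a
        · have hq1v := hq1sup a (hsupp1 a hN)
          have hyha := (opt2_iff hyhopt.1).1 hyhopt a
          rw [hq1v]
          nlinarith [mul_nonneg (by linarith : (0:ℝ) ≤ 1 - t)
            (by linarith : 0 ≤ v - q1 u yh a)]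
        · have hstrict := hyhstrict a hN
          have hcomb : (1-t) * q1 u yh a + t * q1 u σst.2 a = q1 u yh a + t * D a := by
            rw [hDa a]; ring
          by_cases hDpos : 0 < D a
          · have h1 := htg a
            rw [hga a, if_pos ⟨hDpos, hN⟩] at h1
            have h2 := (le_div_iff₀ hDpos).1 h1
            linarith [hcomb]
          · push_neg at hDpos
            have h3 := mul_nonpos_of_nonneg_of_nonpos ht0.le hDpos
            linarith [hcomb]
      have hps2full : ∀ b, 0 < ps.2 b := by
        intro b
        refine hsupp2 b ⟨_, hytopt, ?_⟩
        have h1 : 0 < t * σst.2 b := mul_pos ht0 (hst2.1 b)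
        have h2 : 0 ≤ (1-t) * yh b := mul_nonneg (by linarith) (hyhopt.1.1 b)
        show 0 < (1-t) * yh b + t * σst.2 b
        linarith
      have hr2eq : r.2 = σst.2 := funext fun b => hre2 b (hps2full b)
      have hopt1σ : Opt1 u v σst.1 := by
        refine ⟨hst1.isSimplex', fun y hy => ?_⟩
        have hk := key2 hst hst2 hy
        have hsum : ∑ b, y b * (r.2 b / σst.2 b) = 1 := by
          have h1 : ∀ b ∈ Finset.univ, y b * (r.2 b / σst.2 b) = y b := by
            intro b _
            rw [hr2eq, div_self (ne_of_gt (hst2.1 b)), mul_one]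
          rw [Finset.sum_congr rfl h1, hy.2]
        rw [hsum] at hk
        have hk2 : v1 u σst.1 σst.2 - v1 u σst.1 y = 0 := by rw [hk]; ring
        linarith
      have hps1full : ∀ a, 0 < ps.1 a := fun a => hsupp1 a ⟨σst.1, hopt1σ, hst1.1 a⟩
      have hr1eq : r.1 = σst.1 := funext fun a => hre1 a (hps1full a)
      have hopt2σ : Opt2 u v σst.2 := by
        rw [opt2_iff hst2.isSimplex']
        intro a
        have := hq1sup a (hps1full a)
        linarith
      have hrnash : isNash u r := by
        have hpair : isNash u (r.1, r.2) := by
          rw [hr1eq, hr2eq]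
          exact isNash_of_opt hopt1σ hopt2σ
        exact hpair
      exact hrnot hrnash
    have hbdd : BddBelow ((fun σ => KL2 σ σst) '' NS) := by
      refine ⟨0, ?_⟩
      rintro z ⟨σ', hσ', rfl⟩
      exact add_nonneg (KL_nonneg hσ'.1 hst1) (KL_nonneg hσ'.2.1 hst2)
    have hle1 : sInf ((fun σ => KL2 σ σst) '' NS) ≤ KL2 ps σst :=
      csInf_le hbdd ⟨ps, hpsNS, rfl⟩
    have hge2 : KL2 ps r ≤ sInf ((fun σ => KL2 σ r) '' NS) := by
      refine le_csInf (hNSne.image _) ?_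
      rintro z ⟨σ', hσ', rfl⟩
      exact isMinOn_iff.1 hpsmin _ hσ'
    calc sInf ((fun σ => KL2 σ σst) '' NS) ≤ KL2 ps σst := hle1
      _ < KL2 ps r := hmain
      _ ≤ sInf ((fun σ => KL2 σ r) '' NS) := hge2
  · intro hrnash
    exact stationary_eq_of_nash hμ0 hst hst1 hst2 hr1 hr2 hrnash
end
end

section
/- Fix a mutation rate μ ∈ (0,1]. For every interior reference profile r ∈ Δ°(A₁) × Δ°(A₂) and every ε > 0, there exists δ > 0 such that for every interior reference profile r' with ‖r' − r‖₂ < δ, any stationary point π^{μ,r} of RMD with reference r and any stationary point π^{μ,r'} of RMD with reference r' satisfy ‖π^{μ,r'} − π^{μ,r}‖₂ < ε. In particular, the map sending an interior reference profile to the associated stationary point of RMD is continuous on Δ°(A₁) × Δ°(A₂). -/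
open Finset Real

noncomputable section

/-!
Write the stationarity equation of a player as `q(a) + μ r(a) / σ(a) = v + μ` and pair the
difference of these equations for two stationary points `σ`, `σ'` (references `r`, `r'`) with
`σ - σ'`. The values drop out because `σ - σ'` sums to zero, and the payoff terms of the two
players cancel because the game is zero-sum, leaving
  `∑ r (σ - σ')² / (σ σ') = ∑ (r - r') (σ - σ') / σ'`.
The left side is at least `min r · ‖σ - σ'‖²`. Mutation keeps `σ' ≥ μ min r' / (2 u_max + μ)`,
so the right side is `O(‖r - r'‖)`.
-/

lemma exists_pos_le_of_forall_pos {ι : Type*} [Finite ι] {f : ι → ℝ} (hf : ∀ i, 0 < f i) :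
    ∃ c, 0 < c ∧ ∀ i, c ≤ f i := by
  cases isEmpty_or_nonempty ι
  · exact ⟨1, one_pos, isEmptyElim⟩
  · obtain ⟨i₀, hi₀⟩ := Finite.exists_min f
    exact ⟨f i₀, hf i₀, hi₀⟩

section Simplex

variable {A : Type*} [Fintype A] {p p' : A → ℝ}

lemma isSimplex.le_one (hp : isSimplex p) (a : A) : p a ≤ 1 :=
  hp.2 ▸ Finset.single_le_sum (fun i _ => hp.1 i) (Finset.mem_univ a)

lemma isSimplex.sum_abs_sub_le_two (hp : isSimplex p) (hp' : isSimplex p') :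
    ∑ a, |p a - p' a| ≤ 2 := by
  calc ∑ a, |p a - p' a| ≤ ∑ a, (p a + p' a) :=
        Finset.sum_le_sum fun a _ => abs_sub_le_iff.2 ⟨by linarith [hp'.1 a], by linarith [hp.1 a]⟩
    _ = 2 := by rw [Finset.sum_add_distrib, hp.2, hp'.2]; norm_num

end Simplex

section Payoff

variable {A1 A2 : Type*} {u : A1 → A2 → ℝ} {M : ℝ}

lemma abs_q1_le [Fintype A2] (hu : ∀ a b, |u a b| ≤ M) {y : A2 → ℝ} (hy : isSimplex y)
    (a : A1) : |q1 u y a| ≤ M :=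
  calc |q1 u y a| ≤ ∑ b, y b * |u a b| := by
        simpa only [q1, abs_mul, abs_of_nonneg (hy.1 _)] using
          Finset.abs_sum_le_sum_abs (fun b => y b * u a b) Finset.univ
    _ ≤ ∑ b, y b * M := Finset.sum_le_sum fun b _ => mul_le_mul_of_nonneg_left (hu a b) (hy.1 b)
    _ = M := by rw [← Finset.sum_mul, hy.2, one_mul]

lemma abs_q2_le [Fintype A1] (hu : ∀ a b, |u a b| ≤ M) {x : A1 → ℝ} (hx : isSimplex x)
    (b : A2) : |q2 u x b| ≤ M :=
  abs_q1_le (u := fun b a => -u a b) (fun b a => (abs_neg (u a b)).trans_le (hu a b)) hx b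

lemma abs_v1_le [Fintype A1] [Fintype A2] (hu : ∀ a b, |u a b| ≤ M) {x : A1 → ℝ}
    {y : A2 → ℝ} (hx : isSimplex x) (hy : isSimplex y) : |v1 u x y| ≤ M := by
  have hv : v1 u x y = ∑ a, x a * q1 u y a := by
    simp only [v1, q1, Finset.mul_sum, mul_assoc]
  calc |v1 u x y| ≤ ∑ a, x a * |q1 u y a| := by
        simpa only [hv, abs_mul, abs_of_nonneg (hx.1 _)] using
          Finset.abs_sum_le_sum_abs (fun a => x a * q1 u y a) Finset.univ
    _ ≤ ∑ a, x a * M :=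
        Finset.sum_le_sum fun a _ => mul_le_mul_of_nonneg_left (abs_q1_le hu hy a) (hx.1 a)
    _ = M := by rw [← Finset.sum_mul, hx.2, one_mul]

lemma sum_sub_mul_q1_sub_add_sum_sub_mul_q2_sub [Fintype A1] [Fintype A2]
    (x x' : A1 → ℝ) (y y' : A2 → ℝ) :
    ∑ a, (x a - x' a) * (q1 u y a - q1 u y' a) + ∑ b, (y b - y' b) * (q2 u x b - q2 u x' b)
      = 0 := by
  simp only [q1, q2, ← Finset.sum_sub_distrib, Finset.mul_sum]
  rw [Finset.sum_comm (f := fun b a => _), ← Finset.sum_add_distrib]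
  exact Finset.sum_eq_zero fun a _ => by
    rw [← Finset.sum_add_distrib]; exact Finset.sum_eq_zero fun b _ => by ring

end Payoff

section Balance

variable {μ M p g v r : ℝ}

lemma pos_of_rmd_eq (hμ : 0 < μ) (hr : 0 < r) (hp : 0 ≤ p)
    (h : p * (g - v) + μ * (r - p) = 0) : 0 < p := by
  refine hp.lt_of_ne fun hp0 => ?_
  subst hp0
  nlinarith [mul_pos hμ hr]

lemma div_le_of_rmd_eq (hμ : 0 < μ) (hg : |g| ≤ M) (hv : |v| ≤ M) (hp : 0 ≤ p)
    (h : p * (g - v) + μ * (r - p) = 0) : μ * r / (2 * M + μ) ≤ p := by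
  have hM : 0 ≤ M := (abs_nonneg v).trans hv
  rw [div_le_iff₀ (by positivity)]
  have hgap : v + μ - g ≤ 2 * M + μ := by linarith [(abs_le.1 hg).1, (abs_le.1 hv).2]
  nlinarith [mul_le_mul_of_nonneg_left hgap hp]

end Balance

section Player

variable {A : Type*} [Fintype A] {μ v v' : ℝ} {p p' r r' g g' : A → ℝ}

lemma sum_mul_sq_div_eq_of_rmd_eq (hp : ∑ a, p a = 1) (hp' : ∑ a, p' a = 1)
    (hpos : ∀ a, 0 < p a) (hpos' : ∀ a, 0 < p' a)
    (h : ∀ a, p a * (g a - v) + μ * (r a - p a) = 0)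
    (h' : ∀ a, p' a * (g' a - v') + μ * (r' a - p' a) = 0) :
    μ * ∑ a, r a * (p a - p' a) ^ 2 / (p a * p' a)
      = ∑ a, (p a - p' a) * (g a - g' a) + μ * ∑ a, (r a - r' a) * (p a - p' a) / p' a := by
  have hterm : ∀ a, μ * (r a * (p a - p' a) ^ 2 / (p a * p' a))
      = (p a - p' a) * (g a - g' a) + μ * ((r a - r' a) * (p a - p' a) / p' a)
        - (p a - p' a) * (v - v') := by
    intro a
    have := (hpos a).ne'
    have := (hpos' a).ne'
    field_simp
    linear_combination (p a * (p a - p' a)) * h' a - (p' a * (p a - p' a)) * h a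
  have hvalues : ∑ a, (p a - p' a) * (v - v') = 0 := by
    rw [← Finset.sum_mul, Finset.sum_sub_distrib, hp, hp', sub_self, zero_mul]
  simp only [Finset.mul_sum, hterm, Finset.sum_sub_distrib, Finset.sum_add_distrib, hvalues,
    sub_zero]

lemma isSimplex.mul_sum_sq_sub_le {c : ℝ} (hp : isSimplex p) (hp' : isSimplex p')
    (hpos : ∀ a, 0 < p a) (hpos' : ∀ a, 0 < p' a) (hc : 0 ≤ c) (hcr : ∀ a, c ≤ r a) :
    c * ∑ a, (p a - p' a) ^ 2 ≤ ∑ a, r a * (p a - p' a) ^ 2 / (p a * p' a) := by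
  rw [Finset.mul_sum]
  refine Finset.sum_le_sum fun a _ => ?_
  have hpp' : p a * p' a ≤ 1 := mul_le_one₀ (hp.le_one a) (hp'.1 a) (hp'.le_one a)
  calc c * (p a - p' a) ^ 2 ≤ r a * (p a - p' a) ^ 2 := by gcongr; exact hcr a
    _ ≤ r a * (p a - p' a) ^ 2 / (p a * p' a) :=
        le_div_self (mul_nonneg (hc.trans (hcr a)) (sq_nonneg _))
          (mul_pos (hpos a) (hpos' a)) hpp'

lemma isSimplex.sum_mul_div_le {η β : ℝ} (hp : isSimplex p) (hp' : isSimplex p')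
    (hη : ∀ a, |r a - r' a| ≤ η) (hη0 : 0 ≤ η) (hβ : 0 < β) (hβp : ∀ a, β ≤ p' a) :
    ∑ a, (r a - r' a) * (p a - p' a) / p' a ≤ 2 * η / β := by
  have hterm : ∀ a, (r a - r' a) * (p a - p' a) / p' a ≤ η / β * |p a - p' a| := by
    intro a
    have hnum : (r a - r' a) * (p a - p' a) ≤ η * |p a - p' a| :=
      calc (r a - r' a) * (p a - p' a) ≤ |r a - r' a| * |p a - p' a| := by
            rw [← abs_mul]; exact le_abs_self _
        _ ≤ η * |p a - p' a| := by gcongr; exact hη a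
    rw [div_mul_eq_mul_div]
    exact div_le_div₀ (by positivity) hnum hβ (hβp a)
  calc ∑ a, (r a - r' a) * (p a - p' a) / p' a ≤ ∑ a, η / β * |p a - p' a| :=
        Finset.sum_le_sum fun a _ => hterm a
    _ = η / β * ∑ a, |p a - p' a| := by rw [Finset.mul_sum]
    _ ≤ η / β * 2 := by gcongr; exact hp.sum_abs_sub_le_two hp'
    _ = 2 * η / β := by ring

end Player

section Distance

variable {A1 A2 : Type*} [Fintype A1] [Fintype A2]

lemma dist2_nonneg (σ σ' : (A1 → ℝ) × (A2 → ℝ)) : 0 ≤ dist2 σ σ' := Real.sqrt_nonneg _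

lemma dist2_sq (σ σ' : (A1 → ℝ) × (A2 → ℝ)) :
    dist2 σ σ' ^ 2 = ∑ a, (σ.1 a - σ'.1 a) ^ 2 + ∑ b, (σ.2 b - σ'.2 b) ^ 2 :=
  Real.sq_sqrt (by positivity)

lemma abs_fst_sub_le_dist2 (σ σ' : (A1 → ℝ) × (A2 → ℝ)) (a : A1) :
    |σ.1 a - σ'.1 a| ≤ dist2 σ σ' := by
  refine Real.abs_le_sqrt ?_
  have := Finset.single_le_sum (f := fun a => (σ.1 a - σ'.1 a) ^ 2)
    (fun a _ => sq_nonneg _) (Finset.mem_univ a)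
  have : 0 ≤ ∑ b, (σ.2 b - σ'.2 b) ^ 2 := by positivity
  linarith

lemma abs_snd_sub_le_dist2 (σ σ' : (A1 → ℝ) × (A2 → ℝ)) (b : A2) :
    |σ.2 b - σ'.2 b| ≤ dist2 σ σ' := by
  refine Real.abs_le_sqrt ?_
  have := Finset.single_le_sum (f := fun b => (σ.2 b - σ'.2 b) ^ 2)
    (fun b _ => sq_nonneg _) (Finset.mem_univ b)
  have : 0 ≤ ∑ a, (σ.1 a - σ'.1 a) ^ 2 := by positivity
  linarith

end Distance

theorem isStationary.mul_dist2_sq_le {A1 A2 : Type*} [Fintype A1] [Fintype A2]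
    {u : A1 → A2 → ℝ} {μ M c : ℝ} {r r' σ σ' : (A1 → ℝ) × (A2 → ℝ)} (hμ : 0 < μ) (hc : 0 < c)
    (hu : ∀ a b, |u a b| ≤ M) (hr₁ : ∀ a, c ≤ r.1 a) (hr₂ : ∀ b, c ≤ r.2 b)
    (hr₁' : ∀ a, c ≤ r'.1 a) (hr₂' : ∀ b, c ≤ r'.2 b)
    (hσ : isStationary u μ r σ) (hσ' : isStationary u μ r' σ') :
    c * dist2 σ σ' ^ 2 ≤ 4 * (2 * M + μ) / (μ * c) * dist2 r r' := by
  obtain ⟨hx, hy, hbx, hby⟩ := hσ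
  obtain ⟨hx', hy', hbx', hby'⟩ := hσ'
  have hv : |v1 u σ'.1 σ'.2| ≤ M := abs_v1_le hu hx' hy'
  have hM : 0 < 2 * M + μ := by linarith [abs_nonneg (v1 u σ'.1 σ'.2)]
  have hxpos a := pos_of_rmd_eq hμ (hc.trans_le (hr₁ a)) (hx.1 a) (hbx a)
  have hypos b := pos_of_rmd_eq hμ (hc.trans_le (hr₂ b)) (hy.1 b) (hby b)
  have hxpos' a := pos_of_rmd_eq hμ (hc.trans_le (hr₁' a)) (hx'.1 a) (hbx' a)
  have hypos' b := pos_of_rmd_eq hμ (hc.trans_le (hr₂' b)) (hy'.1 b) (hby' b)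
  have hβ : 0 < μ * c / (2 * M + μ) := by positivity
  have hxβ a : μ * c / (2 * M + μ) ≤ σ'.1 a := le_trans (by gcongr; exact hr₁' a) <|
    div_le_of_rmd_eq hμ (abs_q1_le hu hy' a) hv (hx'.1 a) (hbx' a)
  have hyβ b : μ * c / (2 * M + μ) ≤ σ'.2 b := le_trans (by gcongr; exact hr₂' b) <|
    div_le_of_rmd_eq hμ (abs_q2_le hu hx' b) ((abs_neg _).trans_le hv) (hy'.1 b) (hby' b)
  have hbalance : ∑ a, r.1 a * (σ.1 a - σ'.1 a) ^ 2 / (σ.1 a * σ'.1 a)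
      + ∑ b, r.2 b * (σ.2 b - σ'.2 b) ^ 2 / (σ.2 b * σ'.2 b)
      = ∑ a, (r.1 a - r'.1 a) * (σ.1 a - σ'.1 a) / σ'.1 a
        + ∑ b, (r.2 b - r'.2 b) * (σ.2 b - σ'.2 b) / σ'.2 b := by
    refine mul_left_cancel₀ hμ.ne' ?_
    linear_combination sum_mul_sq_div_eq_of_rmd_eq hx.2 hx'.2 hxpos hxpos' hbx hbx'
      + sum_mul_sq_div_eq_of_rmd_eq hy.2 hy'.2 hypos hypos' hby hby'
      + sum_sub_mul_q1_sub_add_sum_sub_mul_q2_sub (u := u) σ.1 σ'.1 σ.2 σ'.2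
  have L₁ := hx.mul_sum_sq_sub_le hx' hxpos hxpos' hc.le hr₁
  have L₂ := hy.mul_sum_sq_sub_le hy' hypos hypos' hc.le hr₂
  have R₁ := hx.sum_mul_div_le hx' (abs_fst_sub_le_dist2 r r') (dist2_nonneg r r') hβ hxβ
  have R₂ := hy.sum_mul_div_le hy' (abs_snd_sub_le_dist2 r r') (dist2_nonneg r r') hβ hyβ
  have hβinv : 2 * dist2 r r' / (μ * c / (2 * M + μ)) + 2 * dist2 r r' / (μ * c / (2 * M + μ))
      = 4 * (2 * M + μ) / (μ * c) * dist2 r r' := by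
    field_simp; ring
  rw [dist2_sq, ← hβinv]
  linarith

/-- **Lemma 5 (continuity of the stationary-point map).** -/
theorem stationary_point_map_continuous {A1 A2 : Type*}
    [Fintype A1] [Fintype A2]
    (u : A1 → A2 → ℝ)
    (μ : ℝ) (hμ : 0 < μ ∧ μ ≤ 1) :
    ∀ r : (A1 → ℝ) × (A2 → ℝ), isInterior r.1 → isInterior r.2 →
    ∀ ε : ℝ, 0 < ε → ∃ δ : ℝ, 0 < δ ∧
      ∀ r' : (A1 → ℝ) × (A2 → ℝ), isInterior r'.1 → isInterior r'.2 →
        dist2 r' r < δ →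
        ∀ σst σst' : (A1 → ℝ) × (A2 → ℝ),
          isStationary u μ r σst → isStationary u μ r' σst' →
          dist2 σst' σst < ε := by
  obtain ⟨hμ₀, -⟩ := hμ
  intro r hint₁ hint₂ ε hε
  obtain ⟨M, hM⟩ := Finite.exists_le fun ab : A1 × A2 => |u ab.1 ab.2|
  have hu a b : |u a b| ≤ max M 0 := (hM (a, b)).trans (le_max_left _ _)
  obtain ⟨c, hc, hcr⟩ := exists_pos_le_of_forall_pos (f := Sum.elim (r.1 · / 2) (r.2 · / 2))
    (by rintro (a | b); exacts [half_pos (hint₁.1 a), half_pos (hint₂.1 b)])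
  have hcr₁ a : c ≤ r.1 a / 2 := hcr (.inl a)
  have hcr₂ b : c ≤ r.2 b / 2 := hcr (.inr b)
  set K := 4 * (2 * max M 0 + μ) / (μ * c)
  have hK : 0 < K := by positivity
  refine ⟨min c (c * ε ^ 2 / K), by positivity, fun r' _ _ hd σ σ' hσ hσ' => ?_⟩
  have hdc : dist2 r' r < c := hd.trans_le (min_le_left _ _)
  have hr₁ a : c ≤ r.1 a := by linarith [hcr₁ a]
  have hr₂ b : c ≤ r.2 b := by linarith [hcr₂ b]
  have hr₁' a : c ≤ r'.1 a := by
    linarith [(abs_le.1 (abs_fst_sub_le_dist2 r' r a)).1, hcr₁ a]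
  have hr₂' b : c ≤ r'.2 b := by
    linarith [(abs_le.1 (abs_snd_sub_le_dist2 r' r b)).1, hcr₂ b]
  have hholder := isStationary.mul_dist2_sq_le hμ₀ hc hu hr₁' hr₂' hr₁ hr₂ hσ' hσ
  have hKd : K * dist2 r' r < c * ε ^ 2 :=
    calc K * dist2 r' r < K * (c * ε ^ 2 / K) := by gcongr; exact hd.trans_le (min_le_right _ _)
      _ = c * ε ^ 2 := by field_simp
  exact lt_of_pow_lt_pow_left₀ 2 hε.le (lt_of_mul_lt_mul_left (by linarith) hc.le)
end
end

section
/- Let π^{μ,r} be a stationary point of RMD with mutation rate μ ∈ (0,1] and interior reference profile r, and let (π^t) be the iterates of M2WU with full feedback from an interior initial profile with learning rates η_t. Then for every t ≥ 0: KL(π^{μ,r}, π^{t+1}) − KL(π^{μ,r}, π^t) = η_t Σ_{i=1}^{2} ( v_i^{π_i^t, π_{−i}^{μ,r}} + μ − μ Σ_{a∈A_i} r_i(a) · π_i^{μ,r}(a)/π_i^t(a) ) + KL(π^t, π^{t+1}). -/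
open Finset Real

noncomputable section

lemma univ_nonempty_of_interior {A : Type*} [Fintype A] {p : A → ℝ} (hp : isInterior p) :
    (Finset.univ : Finset A).Nonempty := by
  rcases (Finset.univ : Finset A).eq_empty_or_nonempty with h | h
  · exfalso
    have := hp.2
    rw [h, Finset.sum_empty] at this
    norm_num at this
  · exact h

lemma mwu_Z_pos {A : Type*} [Fintype A] {p : A → ℝ} (hp : isInterior p)
    (η : ℝ) (g : A → ℝ) : 0 < ∑ a', p a' * Real.exp (η * g a') :=
  Finset.sum_pos (fun a _ => mul_pos (hp.1 a) (Real.exp_pos _))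
    (univ_nonempty_of_interior hp)

lemma mwu_interior {A : Type*} [Fintype A] {p : A → ℝ} (hp : isInterior p)
    (η : ℝ) (g : A → ℝ) : isInterior (mwuStep η g p) := by
  have hZ := mwu_Z_pos hp η g
  refine ⟨fun a => div_pos (mul_pos (hp.1 a) (Real.exp_pos _)) hZ, ?_⟩
  simp only [mwuStep]
  rw [← Finset.sum_div, div_self hZ.ne']

lemma kl_step {A : Type*} [Fintype A] {p σq : A → ℝ} (hp : isInterior p) (hσ : isInterior σq)
    (η : ℝ) (g : A → ℝ) :
    KL σq (mwuStep η g p) - KL σq p =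
      η * ((∑ a, p a * g a) - ∑ a, σq a * g a) + KL p (mwuStep η g p) := by
  set Z := ∑ a', p a' * Real.exp (η * g a') with hZdef
  have hZ : 0 < Z := mwu_Z_pos hp η g
  have hp' : ∀ a, 0 < mwuStep η g p a := (mwu_interior hp η g).1
  have hlog : ∀ a, Real.log (p a / mwuStep η g p a) = Real.log Z - η * g a := by
    intro a
    have h1 : p a / mwuStep η g p a = Z / Real.exp (η * g a) := by
      simp only [mwuStep, ← hZdef]
      rw [div_div_eq_mul_div, mul_div_mul_left _ _ (hp.1 a).ne']
    rw [h1, Real.log_div hZ.ne' (Real.exp_ne_zero _), Real.log_exp]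
  have key : ∀ (q : A → ℝ), (∀ a, 0 < q a) → (∑ a, q a) = 1 →
      ∑ a, q a * Real.log (q a / mwuStep η g p a) - ∑ a, q a * Real.log (q a / p a)
        = Real.log Z - η * ∑ a, q a * g a := by
    intro q hq hq1
    rw [← Finset.sum_sub_distrib]
    have : ∀ a ∈ Finset.univ, q a * Real.log (q a / mwuStep η g p a)
        - q a * Real.log (q a / p a) = q a * Real.log Z - η * (q a * g a) := by
      intro a _
      rw [← mul_sub, Real.log_div (hq a).ne' (hp' a).ne',
        Real.log_div (hq a).ne' (hp.1 a).ne']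
      have := hlog a
      rw [Real.log_div (hp.1 a).ne' (hp' a).ne'] at this
      have h2 : Real.log (q a) - Real.log (mwuStep η g p a)
          - (Real.log (q a) - Real.log (p a))
          = Real.log (p a) - Real.log (mwuStep η g p a) := by ring
      rw [h2, this]
      ring
    rw [Finset.sum_congr rfl this, Finset.sum_sub_distrib, ← Finset.sum_mul, hq1,
      ← Finset.mul_sum, one_mul]
  have hσeq := key σq hσ.1 hσ.2
  have hKLp : KL p (mwuStep η g p) = Real.log Z - η * ∑ a, p a * g a := by
    rw [KL]
    rw [Finset.sum_congr rfl (fun a _ => by rw [hlog a])]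
    have : ∀ a ∈ Finset.univ, p a * (Real.log Z - η * g a)
        = p a * Real.log Z - η * (p a * g a) := fun a _ => by ring
    rw [Finset.sum_congr rfl this, Finset.sum_sub_distrib, ← Finset.sum_mul, hp.2,
      ← Finset.mul_sum, one_mul]
  simp only [KL] at *
  rw [hσeq, hKLp]
  ring

lemma sum_q1 {A1 A2 : Type*} [Fintype A1] [Fintype A2] (u : A1 → A2 → ℝ)
    (x : A1 → ℝ) (y : A2 → ℝ) : ∑ a, x a * q1 u y a = v1 u x y := by
  rw [v1]
  refine Finset.sum_congr rfl fun a _ => ?_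
  rw [q1, Finset.mul_sum]
  exact Finset.sum_congr rfl fun b _ => by ring

lemma sum_q2 {A1 A2 : Type*} [Fintype A1] [Fintype A2] (u : A1 → A2 → ℝ)
    (x : A1 → ℝ) (y : A2 → ℝ) : ∑ b, y b * q2 u x b = - v1 u x y := by
  simp only [q2, Finset.mul_sum, v1, ← Finset.sum_neg_distrib]
  rw [Finset.sum_comm]
  exact Finset.sum_congr rfl fun a _ => Finset.sum_congr rfl fun b _ => by ring

/-- **Lemma 6 (single-step decomposition of the KL divergence to the stationary point).** -/
theorem kl_single_step_decomposition {A1 A2 : Type*} [Fintype A1] [Fintype A2]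
    (u : A1 → A2 → ℝ)
    (μ : ℝ) (hμ : 0 < μ ∧ μ ≤ 1)
    (r : (A1 → ℝ) × (A2 → ℝ)) (hr1 : isInterior r.1) (hr2 : isInterior r.2)
    (σst : (A1 → ℝ) × (A2 → ℝ)) (hst : isStationary u μ r σst)
    (hst1 : isInterior σst.1) (hst2 : isInterior σst.2)
    (η : ℕ → ℝ) (σ : ℕ → (A1 → ℝ) × (A2 → ℝ))
    (hσ0 : isInterior (σ 0).1 ∧ isInterior (σ 0).2)
    (hM2WU : isM2WU u μ r η σ) :
    ∀ t : ℕ,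
      KL2 σst (σ (t + 1)) - KL2 σst (σ t) =
        η t * ((v1 u (σ t).1 σst.2 + μ - μ * ∑ a, r.1 a * (σst.1 a / (σ t).1 a)) +
               ((- v1 u σst.1 (σ t).2) + μ - μ * ∑ b, r.2 b * (σst.2 b / (σ t).2 b))) +
        KL2 (σ t) (σ (t + 1)) := by
  have hint : ∀ s : ℕ, isInterior (σ s).1 ∧ isInterior (σ s).2 := by
    intro s
    induction s with
    | zero => exact hσ0
    | succ n ih =>
      rw [(hM2WU n).1, (hM2WU n).2]
      exact ⟨mwu_interior ih.1 _ _, mwu_interior ih.2 _ _⟩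
  intro t
  obtain ⟨hx, hy⟩ := hint t
  have hx0 : ∀ a, (σ t).1 a ≠ 0 := fun a => (hx.1 a).ne'
  have hy0 : ∀ b, (σ t).2 b ≠ 0 := fun b => (hy.1 b).ne'
  have step1 := kl_step hx hst1 (η t) (qmu1 u μ r.1 (σ t).1 (σ t).2)
  have step2 := kl_step hy hst2 (η t) (qmu2 u μ r.2 (σ t).1 (σ t).2)
  -- Compute the four gain sums
  have s1 : ∑ a, (σ t).1 a * qmu1 u μ r.1 (σ t).1 (σ t).2 a = v1 u (σ t).1 (σ t).2 := by
    have h : ∀ a ∈ Finset.univ, (σ t).1 a * qmu1 u μ r.1 (σ t).1 (σ t).2 a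
        = (σ t).1 a * q1 u (σ t).2 a + (μ * r.1 a - μ * (σ t).1 a) := by
      intro a _
      rw [qmu1]
      field_simp [hx0 a]
    rw [Finset.sum_congr rfl h, Finset.sum_add_distrib, Finset.sum_sub_distrib,
      ← Finset.mul_sum, ← Finset.mul_sum, hr1.2, hx.2, sum_q1]
    ring
  have s2 : ∑ a, σst.1 a * qmu1 u μ r.1 (σ t).1 (σ t).2 a
      = v1 u σst.1 (σ t).2 + μ * (∑ a, r.1 a * (σst.1 a / (σ t).1 a)) - μ := by
    have h : ∀ a ∈ Finset.univ, σst.1 a * qmu1 u μ r.1 (σ t).1 (σ t).2 a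
        = σst.1 a * q1 u (σ t).2 a + (μ * (r.1 a * (σst.1 a / (σ t).1 a)) - μ * σst.1 a) := by
      intro a _
      rw [qmu1]
      field_simp [hx0 a]
    rw [Finset.sum_congr rfl h, Finset.sum_add_distrib, Finset.sum_sub_distrib,
      ← Finset.mul_sum, ← Finset.mul_sum, hst1.2, sum_q1]
    ring
  have s3 : ∑ b, (σ t).2 b * qmu2 u μ r.2 (σ t).1 (σ t).2 b = - v1 u (σ t).1 (σ t).2 := by
    have h : ∀ b ∈ Finset.univ, (σ t).2 b * qmu2 u μ r.2 (σ t).1 (σ t).2 b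
        = (σ t).2 b * q2 u (σ t).1 b + (μ * r.2 b - μ * (σ t).2 b) := by
      intro b _
      rw [qmu2]
      field_simp [hy0 b]
    rw [Finset.sum_congr rfl h, Finset.sum_add_distrib, Finset.sum_sub_distrib,
      ← Finset.mul_sum, ← Finset.mul_sum, hr2.2, hy.2, sum_q2]
    ring
  have s4 : ∑ b, σst.2 b * qmu2 u μ r.2 (σ t).1 (σ t).2 b
      = - v1 u (σ t).1 σst.2 + μ * (∑ b, r.2 b * (σst.2 b / (σ t).2 b)) - μ := by
    have h : ∀ b ∈ Finset.univ, σst.2 b * qmu2 u μ r.2 (σ t).1 (σ t).2 b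
        = σst.2 b * q2 u (σ t).1 b + (μ * (r.2 b * (σst.2 b / (σ t).2 b)) - μ * σst.2 b) := by
      intro b _
      rw [qmu2]
      field_simp [hy0 b]
    rw [Finset.sum_congr rfl h, Finset.sum_add_distrib, Finset.sum_sub_distrib,
      ← Finset.mul_sum, ← Finset.mul_sum, hst2.2, sum_q2]
    ring
  rw [s1, s2] at step1
  rw [s3, s4] at step2
  simp only [KL2, (hM2WU t).1, (hM2WU t).2]
  linear_combination step1 + step2
end
end

section
/- Fix a mutation rate μ ∈ (0,1] and an interior reference profile r ∈ Δ°(A₁) × Δ°(A₂), and let π^{μ,r} be a stationary point of RMD with reference r. Then π^{μ,r} is a 2μ-Nash equilibrium: explt(π^{μ,r}) ≤ 2μ. -/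
open Finset Real

noncomputable section

/-! At a stationary point every action `a` satisfies
`π(a) (q(a) - v) = μ (π(a) - r(a)) ≤ μ π(a)`, so, as `π(a) > 0`, no action gains more than `μ`
over the current value. A deviation is an average of actions, so neither player can gain more
than `μ` by deviating, and the two gains add up to at most `2μ`. -/

lemma le_of_mul_add_mul_sub_eq_zero {s d μ ρ : ℝ} (hs : 0 < s) (hμ : 0 ≤ μ) (hρ : 0 ≤ ρ)
    (h : s * d + μ * (ρ - s) = 0) : d ≤ μ := by
  nlinarith [mul_nonneg hμ hρ]

section Simplex

variable {A : Type*} [Fintype A]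

lemma isSimplex_pi_single (a : A) [DecidableEq A] : isSimplex (Pi.single a 1 : A → ℝ) :=
  ⟨fun b => by rw [Pi.single_apply]; split_ifs <;> norm_num, by simp⟩

instance [Nonempty A] : Nonempty {p : A → ℝ // isSimplex p} := by
  classical
  exact ⟨⟨_, isSimplex_pi_single (Classical.arbitrary A)⟩⟩

lemma sum_mul_le_of_isSimplex {p g : A → ℝ} {c : ℝ} (hp : isSimplex p) (hg : ∀ a, g a ≤ c) :
    ∑ a, p a * g a ≤ c :=
  calc ∑ a, p a * g a ≤ ∑ a, p a * c :=
        sum_le_sum fun a _ => mul_le_mul_of_nonneg_left (hg a) (hp.1 a)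
    _ = c := by rw [← sum_mul, hp.2, one_mul]

end Simplex

section Game

variable {A1 A2 : Type*} [Fintype A1] [Fintype A2] (u : A1 → A2 → ℝ)

lemma v1_eq_sum_mul_q1 (x : A1 → ℝ) (y : A2 → ℝ) : v1 u x y = ∑ a, x a * q1 u y a := by
  simp only [v1, q1, mul_sum, mul_assoc]

lemma neg_v1_eq_sum_mul_q2 (x : A1 → ℝ) (y : A2 → ℝ) : -v1 u x y = ∑ b, y b * q2 u x b := by
  simp only [v1, q2, mul_sum, ← sum_neg_distrib]
  rw [sum_comm]
  exact sum_congr rfl fun _ _ => sum_congr rfl fun _ _ => by ring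

lemma explt_le_of_forall_q_le [Nonempty A1] [Nonempty A2] {σ : (A1 → ℝ) × (A2 → ℝ)}
    {c₁ c₂ : ℝ} (h₁ : ∀ a, q1 u σ.2 a ≤ c₁) (h₂ : ∀ b, q2 u σ.1 b ≤ c₂) :
    explt u σ ≤ c₁ + c₂ :=
  add_le_add
    (ciSup_le fun x => (v1_eq_sum_mul_q1 u x.1 σ.2).trans_le (sum_mul_le_of_isSimplex x.2 h₁))
    (ciSup_le fun y => (neg_v1_eq_sum_mul_q2 u σ.1 y.1).trans_le (sum_mul_le_of_isSimplex y.2 h₂))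

end Game

/-- **Stationary points of RMD are 2μ-Nash equilibria.** -/
theorem stationary_point_exploitability {A1 A2 : Type*} [Fintype A1] [Fintype A2]
    [Nonempty A1] [Nonempty A2]
    (u : A1 → A2 → ℝ)
    (μ : ℝ) (hμ : 0 < μ ∧ μ ≤ 1)
    (r : (A1 → ℝ) × (A2 → ℝ)) (hr1 : isInterior r.1) (hr2 : isInterior r.2)
    (σst : (A1 → ℝ) × (A2 → ℝ)) (hst : isStationary u μ r σst)
    (hst1 : isInterior σst.1) (hst2 : isInterior σst.2) :
    explt u σst ≤ 2 * μ := by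
  obtain ⟨-, -, h₁, h₂⟩ := hst
  set v := v1 u σst.1 σst.2
  calc explt u σst ≤ (v + μ) + (-v + μ) :=
        explt_le_of_forall_q_le u
          (fun a => sub_le_iff_le_add'.1 <|
            le_of_mul_add_mul_sub_eq_zero (hst1.1 a) hμ.1.le (hr1.1 a).le (h₁ a))
          (fun b => sub_le_iff_le_add'.1 <|
            le_of_mul_add_mul_sub_eq_zero (hst2.1 b) hμ.1.le (hr2.1 b).le (h₂ b))
    _ = 2 * μ := by ring
end
end

section
/- Let π = (π₁, π₂) and π' = (π₁', π₂') be fully supported strategy profiles and r = (r₁, r₂) an interior reference profile. Then Σ_{i=1}^{2} Σ_{a∈A_i} r_i(a) ( √(π_i(a)/π'_i(a)) − √(π'_i(a)/π_i(a)) )² ≥ ( min_{i∈{1,2}, a∈A_i} r_i(a)/π'_i(a) ) · KL(π', π). -/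
open Finset Real

noncomputable section

/-!
For each player, `ln x ≤ x - 1` bounds `KL(π', π)` by the χ²-divergence `∑ (π' - π)² / π`,
the linear terms cancelling because both strategies sum to one. Termwise, the weighted
quasi-metric is that χ²-divergence reweighted by `r / π'`, since
`(√(x/y) - √(y/x))² = (x - y)² / (x y)`.
-/

def chiSq {A : Type*} [Fintype A] (q p : A → ℝ) : ℝ :=
  ∑ a, (q a - p a) ^ 2 / p a

section Divergences

variable {A : Type*} [Fintype A] {p q w : A → ℝ}

theorem KL_le_chiSq (hp : ∀ a, 0 < p a) (hq : ∀ a, 0 < q a)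
    (hsum : ∑ a, q a = ∑ a, p a) : KL q p ≤ chiSq q p := by
  have term (a : A) : q a * log (q a / p a) ≤ (q a - p a) ^ 2 / p a + (q a - p a) := by
    have hlog := log_le_sub_one_of_pos (div_pos (hq a) (hp a))
    calc q a * log (q a / p a) ≤ q a * (q a / p a - 1) :=
          mul_le_mul_of_nonneg_left hlog (hq a).le
      _ = (q a - p a) ^ 2 / p a + (q a - p a) := by
          field_simp [(hp a).ne']
          ring
  calc KL q p ≤ ∑ a, ((q a - p a) ^ 2 / p a + (q a - p a)) := sum_le_sum fun a _ => term a
    _ = chiSq q p := by rw [sum_add_distrib, sum_sub_distrib, hsum, sub_self, add_zero, chiSq]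

theorem sqrt_div_sub_sqrt_div_sq {x y : ℝ} (hx : 0 < x) (hy : 0 < y) :
    (√(x / y) - √(y / x)) ^ 2 = (x - y) ^ 2 / (x * y) := by
  have hprod : √(x / y) * √(y / x) = 1 := by
    rw [← sqrt_mul (div_nonneg hx.le hy.le), div_mul_div_comm, mul_comm x y,
      div_self (mul_pos hy hx).ne', sqrt_one]
  rw [sub_sq, sq_sqrt (div_nonneg hx.le hy.le), sq_sqrt (div_nonneg hy.le hx.le), mul_assoc,
    hprod]
  field_simp
  ring

theorem mul_chiSq_le_sum_sqrt_div_sub_sq {c : ℝ} (hp : ∀ a, 0 < p a) (hq : ∀ a, 0 < q a)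
    (hc : ∀ a, c ≤ w a / q a) :
    c * chiSq q p ≤ ∑ a, w a * (√(p a / q a) - √(q a / p a)) ^ 2 := by
  rw [chiSq, mul_sum]
  refine sum_le_sum fun a _ => ?_
  calc c * ((q a - p a) ^ 2 / p a) ≤ w a / q a * ((q a - p a) ^ 2 / p a) :=
        mul_le_mul_of_nonneg_right (hc a) (div_nonneg (sq_nonneg _) (hp a).le)
    _ = w a * (√(p a / q a) - √(q a / p a)) ^ 2 := by
        rw [sqrt_div_sub_sqrt_div_sq (hp a) (hq a)]
        field_simp [(hp a).ne', (hq a).ne']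
        ring

theorem mul_KL_le_sum_sqrt_div_sub_sq {c : ℝ} (hp : ∀ a, 0 < p a) (hq : ∀ a, 0 < q a)
    (hsum : ∑ a, q a = ∑ a, p a) (hc0 : 0 ≤ c) (hc : ∀ a, c ≤ w a / q a) :
    c * KL q p ≤ ∑ a, w a * (√(p a / q a) - √(q a / p a)) ^ 2 :=
  (mul_le_mul_of_nonneg_left (KL_le_chiSq hp hq hsum) hc0).trans
    (mul_chiSq_le_sum_sqrt_div_sub_sq hp hq hc)

end Divergences

theorem quasi_metric_lower_bound_kl_general {A1 A2 : Type*} [Fintype A1] [Fintype A2]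
    (σ σ' r : (A1 → ℝ) × (A2 → ℝ))
    (hσ1 : isInterior σ.1) (hσ2 : isInterior σ.2)
    (hσ1' : isInterior σ'.1) (hσ2' : isInterior σ'.2)
    (hr1 : isInterior r.1) (hr2 : isInterior r.2) :
    (min (⨅ a, r.1 a / σ'.1 a) (⨅ b, r.2 b / σ'.2 b)) * KL2 σ' σ ≤
      (∑ a, r.1 a * (Real.sqrt (σ.1 a / σ'.1 a) - Real.sqrt (σ'.1 a / σ.1 a)) ^ 2) +
      (∑ b, r.2 b * (Real.sqrt (σ.2 b / σ'.2 b) - Real.sqrt (σ'.2 b / σ.2 b)) ^ 2) := by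
  set c := min (⨅ a, r.1 a / σ'.1 a) (⨅ b, r.2 b / σ'.2 b)
  have hc0 : 0 ≤ c := le_min
    (Real.iInf_nonneg fun a => div_nonneg (hr1.1 a).le (hσ1'.1 a).le)
    (Real.iInf_nonneg fun b => div_nonneg (hr2.1 b).le (hσ2'.1 b).le)
  have hc1 (a : A1) : c ≤ r.1 a / σ'.1 a :=
    (min_le_left _ _).trans (ciInf_le (Finite.bddBelow_range _) a)
  have hc2 (b : A2) : c ≤ r.2 b / σ'.2 b :=
    (min_le_right _ _).trans (ciInf_le (Finite.bddBelow_range _) b)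
  rw [KL2, mul_add]
  exact add_le_add
    (mul_KL_le_sum_sqrt_div_sub_sq hσ1.1 hσ1'.1 (hσ1'.2.trans hσ1.2.symm) hc0 hc1)
    (mul_KL_le_sum_sqrt_div_sub_sq hσ2.1 hσ2'.1 (hσ2'.2.trans hσ2.2.symm) hc0 hc2)

/-- **The weighted quasi-metric lower-bounds the KL divergence.** -/
theorem quasi_metric_lower_bound_kl {A1 A2 : Type*} [Fintype A1] [Fintype A2]
    [Nonempty A1] [Nonempty A2]
    (σ σ' r : (A1 → ℝ) × (A2 → ℝ))
    (hσ1 : isInterior σ.1) (hσ2 : isInterior σ.2)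
    (hσ1' : isInterior σ'.1) (hσ2' : isInterior σ'.2)
    (hr1 : isInterior r.1) (hr2 : isInterior r.2) :
    (min (⨅ a, r.1 a / σ'.1 a) (⨅ b, r.2 b / σ'.2 b)) * KL2 σ' σ ≤
      (∑ a, r.1 a * (Real.sqrt (σ.1 a / σ'.1 a) - Real.sqrt (σ'.1 a / σ.1 a)) ^ 2) +
      (∑ b, r.2 b * (Real.sqrt (σ.2 b / σ'.2 b) - Real.sqrt (σ'.2 b / σ.2 b)) ^ 2) :=
  quasi_metric_lower_bound_kl_general σ σ' r hσ1 hσ2 hσ1' hσ2' hr1 hr2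
end
end

section
/- Let π = (π₁, π₂) and π' = (π₁', π₂') be fully supported strategy profiles such that π_i(a) ≥ ρ for all i, a for some ρ > 0, and let r = (r₁, r₂) be an interior reference profile. Then Σ_{i=1}^{2} Σ_{a∈A_i} r_i(a)² ( 1/π'_i(a) − 1/π_i(a) )² ≤ (2/ρ²) ( max_{i∈{1,2}, a∈A_i} r_i(a)/π'_i(a) )² · KL(π', π). -/
open Finset Real

noncomputable section

lemma my_hasDeriv (q : ℝ) (x : ℝ) (hx : 0 < x) :
    HasDerivAt (fun y => y * Real.log y - y * Real.log q - y + q - (y - q)^2/2)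
      (Real.log x - Real.log q - (x - q)) x := by
  have h1 : HasDerivAt (fun y : ℝ => y * Real.log y) (Real.log x + 1) x :=
    Real.hasDerivAt_mul_log hx.ne'
  have h2 : HasDerivAt (fun y : ℝ => y * Real.log q) (Real.log q) x := by
    simpa using (hasDerivAt_id x).mul_const (Real.log q)
  have h3 : HasDerivAt (fun y : ℝ => (y - q)^2/2) (x - q) x := by
    have h := (((hasDerivAt_id x).sub_const q).pow 2).div_const 2
    simp only [id_eq, pow_one, Nat.cast_ofNat, mul_one] at h
    refine h.congr_deriv ?_
    ring
  have := (((h1.sub h2).sub (hasDerivAt_id x)).add_const q).sub h3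
  refine this.congr_deriv ?_
  ring

lemma key_scalar (p q : ℝ) (hp0 : 0 < p) (hp1 : p ≤ 1) (hq0 : 0 < q) (hq1 : q ≤ 1) :
    (p - q)^2/2 ≤ p * Real.log (p/q) - p + q := by
  set f : ℝ → ℝ := fun y => y * Real.log y - y * Real.log q - y + q - (y - q)^2/2 with hf
  have hfq : f q = 0 := by simp [hf]
  have hgoal : f p ≥ 0 → (p - q)^2/2 ≤ p * Real.log (p/q) - p + q := by
    intro h
    rw [Real.log_div hp0.ne' hq0.ne']
    simp only [hf] at h
    nlinarith [h]
  apply hgoal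
  rcases le_total p q with hpq | hpq
  · -- antitone on [p,q]
    have hanti : AntitoneOn f (Set.Icc p q) := by
      apply antitoneOn_of_deriv_nonpos (convex_Icc p q)
      · apply ContinuousOn.sub
        apply ContinuousOn.add
        apply ContinuousOn.sub
        apply ContinuousOn.sub
        · exact (continuousOn_id.mul (Real.continuousOn_log.mono (by
            intro x hx
            simp only [Set.mem_Icc] at hx
            simp only [Set.mem_compl_iff, Set.mem_singleton_iff]
            linarith [hx.1])))
        · exact continuousOn_id.mul continuousOn_const
        · exact continuousOn_id
        · exact continuousOn_const
        · exact (((continuousOn_id.sub continuousOn_const).pow 2).div_const 2)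
      · intro x hx
        rw [interior_Icc] at hx
        exact (my_hasDeriv q x (lt_trans hp0 hx.1)).differentiableAt.differentiableWithinAt
      · intro x hx
        rw [interior_Icc] at hx
        have hx0 : 0 < x := lt_trans hp0 hx.1
        rw [(my_hasDeriv q x hx0).deriv]
        have hlog : Real.log x - Real.log q ≤ (x - q)/q := by
          have := Real.log_le_sub_one_of_pos (div_pos hx0 hq0)
          rw [Real.log_div hx0.ne' hq0.ne'] at this
          have hq : x/q - 1 = (x - q)/q := by field_simp
          rw [hq] at this
          linarith
        have h2 : (x - q)/q ≤ x - q := by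
          rw [div_le_iff₀ hq0]
          nlinarith [hx.2]
        linarith
    have := hanti (Set.left_mem_Icc.mpr hpq) (Set.right_mem_Icc.mpr hpq) hpq
    linarith [hfq ▸ this]
  · -- monotone on [q,p]
    have hmono : MonotoneOn f (Set.Icc q p) := by
      apply monotoneOn_of_deriv_nonneg (convex_Icc q p)
      · apply ContinuousOn.sub
        apply ContinuousOn.add
        apply ContinuousOn.sub
        apply ContinuousOn.sub
        · exact (continuousOn_id.mul (Real.continuousOn_log.mono (by
            intro x hx
            simp only [Set.mem_Icc] at hx
            simp only [Set.mem_compl_iff, Set.mem_singleton_iff]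
            linarith [hx.1])))
        · exact continuousOn_id.mul continuousOn_const
        · exact continuousOn_id
        · exact continuousOn_const
        · exact (((continuousOn_id.sub continuousOn_const).pow 2).div_const 2)
      · intro x hx
        rw [interior_Icc] at hx
        exact (my_hasDeriv q x (lt_trans hq0 hx.1)).differentiableAt.differentiableWithinAt
      · intro x hx
        rw [interior_Icc] at hx
        have hx0 : 0 < x := lt_trans hq0 hx.1
        have hx1 : x ≤ 1 := le_of_lt (lt_of_lt_of_le hx.2 hp1)
        rw [(my_hasDeriv q x hx0).deriv]
        have hlog : (x - q)/x ≤ Real.log x - Real.log q := by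
          have h1 := Real.log_le_sub_one_of_pos (div_pos hq0 hx0)
          rw [Real.log_div hq0.ne' hx0.ne'] at h1
          have h2 : q/x - 1 = (q - x)/x := by field_simp
          rw [h2] at h1
          have h4 : (x - q)/x = -((q - x)/x) := by ring
          linarith [h4]
        have h2 : x - q ≤ (x - q)/x := by
          rw [le_div_iff₀ hx0]
          nlinarith [hx.1]
        linarith
    have := hmono (Set.left_mem_Icc.mpr hpq) (Set.right_mem_Icc.mpr hpq) hpq
    linarith [hfq ▸ this]

lemma key_player {A : Type*} [Fintype A] (p q r : A → ℝ) (M ρ : ℝ)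
    (hp : isInterior p) (hq : isInterior q) (hρ : 0 < ρ) (hρq : ∀ a, ρ ≤ q a)
    (hM : 0 ≤ M) (hMr : ∀ a, r a / p a ≤ M) (hr : ∀ a, 0 < r a) :
    ∑ a, r a ^ 2 * (1 / p a - 1 / q a) ^ 2 ≤ (2 / ρ ^ 2) * M ^ 2 * KL p q := by
  have hp1 : ∀ a, p a ≤ 1 := by
    intro a
    calc p a ≤ ∑ b, p b := Finset.single_le_sum (fun b _ => (hp.1 b).le) (mem_univ a)
    _ = 1 := hp.2
  have hq1 : ∀ a, q a ≤ 1 := by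
    intro a
    calc q a ≤ ∑ b, q b := Finset.single_le_sum (fun b _ => (hq.1 b).le) (mem_univ a)
    _ = 1 := hq.2
  have step1 : ∑ a, r a ^ 2 * (1 / p a - 1 / q a) ^ 2 ≤
      (M ^ 2 / ρ ^ 2) * ∑ a, (p a - q a) ^ 2 := by
    rw [Finset.mul_sum]
    apply Finset.sum_le_sum
    intro a _
    have hpa := hp.1 a
    have hqa := hq.1 a
    have hra : r a / p a ≤ M := hMr a
    have hra0 : 0 ≤ r a / p a := le_of_lt (div_pos (hr a) hpa)
    have h1 : r a ^ 2 * (1 / p a - 1 / q a) ^ 2 = (r a / p a) ^ 2 * ((p a - q a) ^ 2 / q a ^ 2) := by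
      field_simp
      ring
    rw [h1]
    have h2 : (r a / p a) ^ 2 ≤ M ^ 2 := by nlinarith
    have h3 : (p a - q a) ^ 2 / q a ^ 2 ≤ (p a - q a) ^ 2 / ρ ^ 2 := by
      apply div_le_div_of_nonneg_left (sq_nonneg _) (by positivity)
      nlinarith [hρq a, hρ]
    calc (r a / p a) ^ 2 * ((p a - q a) ^ 2 / q a ^ 2)
        ≤ M ^ 2 * ((p a - q a) ^ 2 / ρ ^ 2) := by
          apply mul_le_mul h2 h3 (by positivity) (by positivity)
      _ = M ^ 2 / ρ ^ 2 * (p a - q a) ^ 2 := by ring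
  have step2 : ∑ a, (p a - q a) ^ 2 ≤ 2 * KL p q := by
    have : ∑ a, (p a - q a) ^ 2 / 2 ≤ ∑ a, (p a * Real.log (p a / q a) - p a + q a) :=
      Finset.sum_le_sum (fun a _ => key_scalar (p a) (q a) (hp.1 a) (hp1 a) (hq.1 a) (hq1 a))
    have hsum : ∑ a, (p a * Real.log (p a / q a) - p a + q a) = KL p q := by
      rw [KL]
      rw [Finset.sum_add_distrib, Finset.sum_sub_distrib, hp.2, hq.2]
      ring
    rw [hsum] at this
    have h2 : ∑ a, (p a - q a) ^ 2 / 2 = (∑ a, (p a - q a) ^ 2) / 2 := by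
      rw [Finset.sum_div]
    linarith [h2 ▸ this]
  calc ∑ a, r a ^ 2 * (1 / p a - 1 / q a) ^ 2
      ≤ (M ^ 2 / ρ ^ 2) * ∑ a, (p a - q a) ^ 2 := step1
    _ ≤ (M ^ 2 / ρ ^ 2) * (2 * KL p q) := by
        apply mul_le_mul_of_nonneg_left step2 (by positivity)
    _ = (2 / ρ ^ 2) * M ^ 2 * KL p q := by ring

/-- **Inverse-probability differences are controlled by the KL divergence.** -/
theorem inverse_prob_upper_bound_kl {A1 A2 : Type*} [Fintype A1] [Fintype A2]
    [Nonempty A1] [Nonempty A2]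
    (σ σ' r : (A1 → ℝ) × (A2 → ℝ))
    (hσ1 : isInterior σ.1) (hσ2 : isInterior σ.2)
    (hσ1' : isInterior σ'.1) (hσ2' : isInterior σ'.2)
    (hr1 : isInterior r.1) (hr2 : isInterior r.2)
    (ρ : ℝ) (hρ : 0 < ρ) (hρ1 : ∀ a, ρ ≤ σ.1 a) (hρ2 : ∀ b, ρ ≤ σ.2 b) :
    (∑ a, r.1 a ^ 2 * (1 / σ'.1 a - 1 / σ.1 a) ^ 2) +
    (∑ b, r.2 b ^ 2 * (1 / σ'.2 b - 1 / σ.2 b) ^ 2) ≤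
      (2 / ρ ^ 2) *
        (max (⨆ a, r.1 a / σ'.1 a) (⨆ b, r.2 b / σ'.2 b)) ^ 2 * KL2 σ' σ := by
  set M := max (⨆ a, r.1 a / σ'.1 a) (⨆ b, r.2 b / σ'.2 b) with hM
  have hbdd1 : BddAbove (Set.range fun a => r.1 a / σ'.1 a) := (Set.finite_range _).bddAbove
  have hbdd2 : BddAbove (Set.range fun b => r.2 b / σ'.2 b) := (Set.finite_range _).bddAbove
  have hM1 : ∀ a, r.1 a / σ'.1 a ≤ M :=
    fun a => le_trans (le_ciSup hbdd1 a) (le_max_left _ _)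
  have hM2 : ∀ b, r.2 b / σ'.2 b ≤ M :=
    fun b => le_trans (le_ciSup hbdd2 b) (le_max_right _ _)
  have hMpos : 0 ≤ M := by
    obtain ⟨a⟩ := (inferInstance : Nonempty A1)
    exact le_trans (le_of_lt (div_pos (hr1.1 a) (hσ1'.1 a))) (hM1 a)
  have h1 := key_player σ'.1 σ.1 r.1 M ρ hσ1' hσ1 hρ hρ1 hMpos hM1 hr1.1
  have h2 := key_player σ'.2 σ.2 r.2 M ρ hσ2' hσ2 hρ hρ2 hMpos hM2 hr2.1
  have : KL2 σ' σ = KL σ'.1 σ.1 + KL σ'.2 σ.2 := rfl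
  rw [this]
  calc (∑ a, r.1 a ^ 2 * (1 / σ'.1 a - 1 / σ.1 a) ^ 2) +
      (∑ b, r.2 b ^ 2 * (1 / σ'.2 b - 1 / σ.2 b) ^ 2)
      ≤ (2 / ρ ^ 2) * M ^ 2 * KL σ'.1 σ.1 + (2 / ρ ^ 2) * M ^ 2 * KL σ'.2 σ.2 :=
        add_le_add h1 h2
    _ = (2 / ρ ^ 2) * M ^ 2 * (KL σ'.1 σ.1 + KL σ'.2 σ.2) := by ring
end
end

section
/- Let π^t = (π₁^t, π₂^t) be a fully supported strategy profile, μ ∈ (0,1], r an interior reference profile, and for each player i define the gain vector g_i(a) = q_i^{π^t}(a) + μ r_i(a)/π_i^t(a). Let π^{t+1} be the multiplicative-weights update π_i^{t+1}(a) = π_i^t(a) exp(η g_i(a)) / Σ_{a'} π_i^t(a') exp(η g_i(a')) with learning rate η > 0. If η (g_i(a') − g_i(a)) ≤ 1 for all i and all a, a' ∈ A_i, then KL(π^t, π^{t+1}) ≤ η² Σ_{i=1}^{2} Σ_{a∈A_i} Σ_{a'∈A_i} π_i^t(a) π_i^t(a') ( g_i(a') − g_i(a) )². -/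
open Finset Real

noncomputable section

/-! Centre the gains at their `p`-mean `m`. The divergence `KL(p, p')` of one
multiplicative-weights step equals `log 𝔼_p[exp(η (g - m))]`. When each exponent is at most `1`,
`exp z ≤ 1 + z + z²` bounds this expectation by `1 + η² Var_p(g)`, and `log s ≤ s - 1` turns that
into `KL ≤ η² Var_p(g)`. Finally `Var_p(g)` is half of `∑ p a p a' (g a' - g a)²`. -/

theorem Real.exp_le_one_add_add_sq {z : ℝ} (hz : z ≤ 1) : exp z ≤ 1 + z + z ^ 2 := by
  rcases le_or_gt (-1) z with h | h
  · linarith [(abs_le.1 (abs_exp_sub_one_sub_id_le (abs_le.2 ⟨h, hz⟩))).2]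
  · have : exp z < 1 / 2 := (exp_lt_exp.2 h).trans exp_neg_one_lt_half
    nlinarith [sq_nonneg (z + 1 / 2)]

section Simplex

variable {A : Type*} [Fintype A] {p : A → ℝ}

theorem sub_sum_mul_eq_sum_mul_sub (hp : ∑ a, p a = 1) (g : A → ℝ) (a : A) :
    g a - ∑ b, p b * g b = ∑ b, p b * (g a - g b) := by
  simp_rw [mul_sub, sum_sub_distrib, ← sum_mul, hp, one_mul]

theorem sum_mul_sub_sum_mul_eq_zero (hp : ∑ a, p a = 1) (g : A → ℝ) :
    ∑ a, p a * (g a - ∑ b, p b * g b) = 0 := by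
  simp_rw [mul_sub, sum_sub_distrib, ← sum_mul, hp, one_mul, sub_self]

theorem sum_sum_mul_mul_sub_sq_eq_two_mul (hp : ∑ a, p a = 1) (g : A → ℝ) :
    ∑ a, ∑ a', p a * p a' * (g a' - g a) ^ 2 = 2 * ∑ a, p a * (g a - ∑ b, p b * g b) ^ 2 := by
  set m := ∑ b, p b * g b
  have hexp : ∀ a a', p a * p a' * (g a' - g a) ^ 2 =
      p a * (p a' * (g a' - m) ^ 2) - 2 * (p a * (g a - m)) * (p a' * (g a' - m))
        + p a' * (p a * (g a - m) ^ 2) := fun a a' => by ring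
  have hc : ∑ a, p a * (g a - m) = 0 := sum_mul_sub_sum_mul_eq_zero hp g
  simp_rw [hexp, sum_add_distrib, sum_sub_distrib, ← mul_sum, ← sum_mul, hc, hp,
    one_mul, mul_zero, sub_zero, two_mul]

theorem isSimplex.sum_mul_exp_pos (hp : isSimplex p) (f : A → ℝ) :
    0 < ∑ a, p a * exp (f a) := by
  obtain ⟨a, ha⟩ : ∃ a, 0 < p a := by
    by_contra! h
    linarith [sum_nonpos fun a (_ : a ∈ univ) => h a, hp.2]
  exact sum_pos' (fun b _ => mul_nonneg (hp.1 b) (exp_pos _).le)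
    ⟨a, mem_univ a, mul_pos ha (exp_pos _)⟩

theorem KL_mwuStep_eq_log_sum_mul_exp (hp : isSimplex p) (η : ℝ) (g : A → ℝ) :
    KL p (mwuStep η g p) = log (∑ a, p a * exp (η * (g a - ∑ b, p b * g b))) := by
  set Z := ∑ a, p a * exp (η * g a)
  have hZ : 0 < Z := hp.sum_mul_exp_pos _
  have hterm : ∀ a, p a * log (p a / mwuStep η g p a) = p a * (log Z - η * g a) := by
    intro a
    rcases (hp.1 a).eq_or_lt with h | h
    · simp [← h]
    · rw [mwuStep, div_div_eq_mul_div, mul_div_mul_left _ _ h.ne',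
        log_div hZ.ne' (exp_pos _).ne', log_exp]
  have hZ' : ∑ a, p a * exp (η * (g a - ∑ b, p b * g b)) = Z / exp (η * ∑ b, p b * g b) := by
    simp_rw [mul_sub, exp_sub, ← mul_div_assoc, ← sum_div]
    rfl
  rw [KL, sum_congr rfl fun a _ => hterm a, hZ', log_div hZ.ne' (exp_pos _).ne', log_exp]
  simp_rw [mul_sub, sum_sub_distrib, ← sum_mul, hp.2, mul_left_comm _ η, ← mul_sum]
  ring

theorem log_sum_mul_exp_le_sum_mul_sq (hp : isSimplex p) {d : A → ℝ}
    (hmean : ∑ a, p a * d a = 0) (hd : ∀ a, d a ≤ 1) :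
    log (∑ a, p a * exp (d a)) ≤ ∑ a, p a * d a ^ 2 := by
  have hS : ∑ a, p a * exp (d a) ≤ 1 + ∑ a, p a * d a ^ 2 := calc
    _ ≤ ∑ a, p a * (1 + d a + d a ^ 2) :=
      sum_le_sum fun a _ => mul_le_mul_of_nonneg_left (exp_le_one_add_add_sq (hd a)) (hp.1 a)
    _ = 1 + ∑ a, p a * d a ^ 2 := by
      simp_rw [mul_add, sum_add_distrib, hmean, mul_one, hp.2, add_zero]
  linarith [log_le_sub_one_of_pos (hp.sum_mul_exp_pos d)]

theorem KL_mwuStep_le (hp : isSimplex p) {η : ℝ} {g : A → ℝ}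
    (hsmall : ∀ a a', η * (g a' - g a) ≤ 1) :
    KL p (mwuStep η g p) ≤ η ^ 2 * ∑ a, ∑ a', p a * p a' * (g a' - g a) ^ 2 := by
  set m := ∑ b, p b * g b
  have hmean : ∑ a, p a * (η * (g a - m)) = 0 := by
    rw [← mul_zero η, ← sum_mul_sub_sum_mul_eq_zero hp.2 g, mul_sum]
    exact sum_congr rfl fun a _ => by ring
  have hd : ∀ a, η * (g a - m) ≤ 1 := fun a => calc
    η * (g a - m) = ∑ b, p b * (η * (g a - g b)) := by
      rw [sub_sum_mul_eq_sum_mul_sub hp.2, mul_sum]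
      exact sum_congr rfl fun b _ => by ring
    _ ≤ ∑ b, p b * 1 := sum_le_sum fun b _ => mul_le_mul_of_nonneg_left (hsmall b a) (hp.1 b)
    _ = 1 := by rw [← sum_mul, hp.2, one_mul]
  have hvar : 0 ≤ ∑ a, p a * (g a - m) ^ 2 :=
    sum_nonneg fun a _ => mul_nonneg (hp.1 a) (sq_nonneg _)
  calc KL p (mwuStep η g p) = log (∑ a, p a * exp (η * (g a - m))) :=
        KL_mwuStep_eq_log_sum_mul_exp hp η g
    _ ≤ ∑ a, p a * (η * (g a - m)) ^ 2 := log_sum_mul_exp_le_sum_mul_sq hp hmean hd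
    _ = η ^ 2 * ∑ a, p a * (g a - m) ^ 2 := by
      simp_rw [mul_pow, mul_left_comm _ (η ^ 2), ← mul_sum]
    _ ≤ η ^ 2 * (2 * ∑ a, p a * (g a - m) ^ 2) := by gcongr; linarith
    _ = η ^ 2 * ∑ a, ∑ a', p a * p a' * (g a' - g a) ^ 2 := by
      rw [sum_sum_mul_mul_sub_sq_eq_two_mul hp.2]

end Simplex

theorem mwu_step_kl_bound_general {A1 A2 : Type*} [Fintype A1] [Fintype A2]
    (x : A1 → ℝ) (y : A2 → ℝ) (hx : isInterior x) (hy : isInterior y)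
    (g1 : A1 → ℝ) (g2 : A2 → ℝ)
    (η : ℝ)
    (hsmall1 : ∀ a a', η * (g1 a' - g1 a) ≤ 1)
    (hsmall2 : ∀ b b', η * (g2 b' - g2 b) ≤ 1)
    (x' : A1 → ℝ) (y' : A2 → ℝ)
    (hx' : x' = mwuStep η g1 x) (hy' : y' = mwuStep η g2 y) :
    KL x x' + KL y y' ≤
      η ^ 2 * ((∑ a, ∑ a', x a * x a' * (g1 a' - g1 a) ^ 2) +
               (∑ b, ∑ b', y b * y b' * (g2 b' - g2 b) ^ 2)) := by
  subst hx' hy'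
  rw [mul_add]
  exact add_le_add (KL_mwuStep_le ⟨fun a => (hx.1 a).le, hx.2⟩ hsmall1)
    (KL_mwuStep_le ⟨fun b => (hy.1 b).le, hy.2⟩ hsmall2)

/-- **One-step KL bound for the multiplicative-weights update with mutated gains.** -/
theorem mwu_step_kl_bound {A1 A2 : Type*} [Fintype A1] [Fintype A2]
    (u : A1 → A2 → ℝ)
    (μ : ℝ) (hμ : 0 < μ ∧ μ ≤ 1)
    (r : (A1 → ℝ) × (A2 → ℝ)) (hr1 : isInterior r.1) (hr2 : isInterior r.2)
    (x : A1 → ℝ) (y : A2 → ℝ) (hx : isInterior x) (hy : isInterior y)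
    (g1 : A1 → ℝ) (g2 : A2 → ℝ)
    (hg1 : ∀ a, g1 a = q1 u y a + μ * r.1 a / x a)
    (hg2 : ∀ b, g2 b = q2 u x b + μ * r.2 b / y b)
    (η : ℝ) (hη : 0 < η)
    (hsmall1 : ∀ a a', η * (g1 a' - g1 a) ≤ 1)
    (hsmall2 : ∀ b b', η * (g2 b' - g2 b) ≤ 1)
    (x' : A1 → ℝ) (y' : A2 → ℝ)
    (hx' : x' = mwuStep η g1 x) (hy' : y' = mwuStep η g2 y) :
    KL x x' + KL y y' ≤
      η ^ 2 * ((∑ a, ∑ a', x a * x a' * (g1 a' - g1 a) ^ 2) +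
               (∑ b, ∑ b', y b * y b' * (g2 b' - g2 b) ^ 2)) :=
  mwu_step_kl_bound_general x y hx hy g1 g2 η hsmall1 hsmall2 x' y' hx' hy'
end
end
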